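/- arXiv:2411.10892 — 11 statements merged into one kernel-verified Lean document; each statement's English description precedes it below -/
import Mathlib

section
/- Let t ∈ [0,1], let τ : [0,1] → ℝ be a measurable function, and let F₁, F₂ : ℝ → [0,1] be nondecreasing functions. For i = 1, 2 set pᵢ := ∫₀ᵗ (1 − Fᵢ(τ(s))) ds. Then ∫₀ᵗ (1 − F₁(τ(s))·F₂(τ(s))) ds ≤ 1 − (1 − p₁)·(1 − p₂). -/
/-!
With `f = 1 - F₁ ∘ τ` and `g = 1 - F₂ ∘ τ`, the integrand `1 - F₁ F₂ = f + g - f g` integrates to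
`p₁ + p₂ - ∫ f g`, so the claim is `p₁ p₂ ≤ ∫ f g`. Both `f` and `g` are antitone functions of `τ`,
hence similarly ordered, and integrating `(f y - f x) (g y - g x) ≥ 0` in both variables gives
Chebyshev's inequality `p₁ p₂ ≤ t ∫ f g`, which is at most `∫ f g` because `t ≤ 1`.
-/

open MeasureTheory Set

section

variable {α : Type*} [MeasurableSpace α] {μ : Measure α} [IsFiniteMeasure μ] {f g : α → ℝ}

lemma integral_sub_mul_sub (hf : Integrable f μ) (hg : Integrable g μ)
    (hfg : Integrable (fun y => f y * g y) μ) (x : α) :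
    ∫ y, (f y - f x) * (g y - g x) ∂μ =
      ∫ y, f y * g y ∂μ - f x * ∫ y, g y ∂μ - g x * ∫ y, f y ∂μ + μ.real univ * (f x * g x) := by
  have hexpand : ∀ y, (f y - f x) * (g y - g x) = f y * g y - f x * g y - g x * f y + f x * g x :=
    fun y => by ring
  simp only [hexpand]
  rw [integral_add (by fun_prop) (integrable_const _), integral_sub (by fun_prop) (by fun_prop),
    integral_sub hfg (by fun_prop), integral_const_mul, integral_const_mul, integral_const,
    smul_eq_mul]

theorem Monovary.integral_mul_integral_le_measureReal_univ_mul_integral_mul (hmono : Monovary f g)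
    (hf : Integrable f μ) (hg : Integrable g μ) (hfg : Integrable (fun x => f x * g x) μ) :
    (∫ x, f x ∂μ) * ∫ x, g x ∂μ ≤ μ.real univ * ∫ x, f x * g x ∂μ := by
  have hinner : ∀ x, 0 ≤ ∫ y, (f y - f x) * (g y - g x) ∂μ := fun x =>
    integral_nonneg fun y => monovary_iff_forall_mul_nonneg.1 hmono x y
  have houter : 0 ≤ ∫ x, ∫ y, (f y - f x) * (g y - g x) ∂μ ∂μ := integral_nonneg hinner
  simp only [integral_sub_mul_sub hf hg hfg] at houter
  rw [integral_add (by fun_prop) (by fun_prop), integral_sub (by fun_prop) (by fun_prop),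
    integral_sub (integrable_const _) (by fun_prop), integral_const, integral_mul_const,
    integral_mul_const, integral_const_mul, smul_eq_mul] at houter
  linarith

lemma integrable_of_mem_unitInterval (hf : Measurable f) (h01 : ∀ x, f x ∈ unitInterval) :
    Integrable f μ :=
  .of_bound hf.aestronglyMeasurable 1 <| ae_of_all _ fun x => by
    rw [Real.norm_of_nonneg (h01 x).1]
    exact (h01 x).2

theorem Monovary.integral_one_sub_mul_le {a b : α → ℝ} (hab : Monovary a b) (hμ : μ.real univ ≤ 1)
    (ha : Measurable a) (hb : Measurable b) (ha01 : ∀ x, a x ∈ unitInterval)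
    (hb01 : ∀ x, b x ∈ unitInterval) :
    ∫ x, (1 - a x * b x) ∂μ ≤ 1 - (1 - ∫ x, (1 - a x) ∂μ) * (1 - ∫ x, (1 - b x) ∂μ) := by
  set f := fun x => 1 - a x
  set g := fun x => 1 - b x
  have hf01 : ∀ x, f x ∈ unitInterval := fun x => Icc.mem_iff_one_sub_mem.mp (ha01 x)
  have hg01 : ∀ x, g x ∈ unitInterval := fun x => Icc.mem_iff_one_sub_mem.mp (hb01 x)
  have hfg01 : ∀ x, f x * g x ∈ unitInterval := fun x => unitInterval.mul_mem (hf01 x) (hg01 x)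
  have hf : Integrable f μ := integrable_of_mem_unitInterval (by fun_prop) hf01
  have hg : Integrable g μ := integrable_of_mem_unitInterval (by fun_prop) hg01
  have hfg : Integrable (fun x => f x * g x) μ := integrable_of_mem_unitInterval (by fun_prop) hfg01
  have hmono : Monovary f g := monovary_iff_forall_mul_nonneg.2 fun i j => by
    convert monovary_iff_forall_mul_nonneg.1 hab i j using 1
    ring
  have hcov : (∫ x, f x ∂μ) * ∫ x, g x ∂μ ≤ ∫ x, f x * g x ∂μ :=
    (hmono.integral_mul_integral_le_measureReal_univ_mul_integral_mul hf hg hfg).trans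
      (mul_le_of_le_one_left (integral_nonneg fun x => (hfg01 x).1) hμ)
  have hunion : ∫ x, (1 - a x * b x) ∂μ = ∫ x, f x ∂μ + ∫ x, g x ∂μ - ∫ x, f x * g x ∂μ := by
    rw [← integral_add hf hg, ← integral_sub (by fun_prop) hfg]
    congr 1 with x
    ring
  rw [hunion]
  linarith

end

/-- **Lemma 2.2.** Replacing two independent rewards by a single reward distributed as their
maximum decreases the probability of stopping before any time `t`. -/
theorem stmt0
    (t : ℝ) (ht : t ∈ Set.Icc (0:ℝ) 1)
    (τ : ℝ → ℝ) (hτ : Measurable τ)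
    (F₁ F₂ : ℝ → ℝ) (hF₁mono : Monotone F₁) (hF₂mono : Monotone F₂)
    (hF₁ : ∀ x, F₁ x ∈ Set.Icc (0:ℝ) 1) (hF₂ : ∀ x, F₂ x ∈ Set.Icc (0:ℝ) 1)
    (p₁ p₂ : ℝ)
    (hp₁ : p₁ = ∫ s in (0:ℝ)..t, (1 - F₁ (τ s)))
    (hp₂ : p₂ = ∫ s in (0:ℝ)..t, (1 - F₂ (τ s))) :
    (∫ s in (0:ℝ)..t, (1 - F₁ (τ s) * F₂ (τ s))) ≤ 1 - (1 - p₁) * (1 - p₂) := by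
  obtain ⟨ht0, ht1⟩ := ht
  subst hp₁ hp₂
  simp only [intervalIntegral.integral_of_le ht0]
  have hμ : (volume.restrict (Ioc 0 t)).real univ ≤ 1 := by
    rw [measureReal_restrict_apply_univ, Real.volume_real_Ioc_of_le ht0]
    linarith
  exact ((hF₁mono.monovary hF₂mono).comp_right τ).integral_one_sub_mul_le hμ
    (hF₁mono.measurable.comp hτ) (hF₂mono.measurable.comp hτ)
    (fun s => hF₁ (τ s)) fun s => hF₂ (τ s)
end

section
/- Let t ∈ [0,1], let τ : [0,1] → ℝ be a measurable function, and let F₁, F₂ : ℝ → [0,1] be nondecreasing functions. For i = 1, 2 set pᵢ := ∫₀ᵗ (1 − Fᵢ(τ(s))) ds, and set q := ∫₀ᵗ (1 − √(F₁(τ(s))·F₂(τ(s)))) ds. Then 1 − (1 − p₁)·(1 − p₂) ≤ 1 − (1 − q)², i.e., (1 − q)² ≤ (1 − p₁)·(1 − p₂). -/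
/-!
With `gᵢ = Fᵢ ∘ τ` on `(0, t]` one has `1 - pᵢ = (1 - t) + ∫ gᵢ` and
`1 - q = (1 - t) + ∫ √(g₁ g₂)`. Cauchy–Schwarz bounds `∫ √(g₁ g₂)` by `√(∫ g₁) √(∫ g₂)`, and
`(s + √(ab))² ≤ (s + a)(s + b)` for `s, a, b ≥ 0` is AM–GM.
-/

open MeasureTheory Set

theorem integral_sqrt_mul_le_sqrt_mul_sqrt {α : Type*} [MeasurableSpace α] {μ : Measure α}
    {f g : α → ℝ} (hf₀ : 0 ≤ f) (hg₀ : 0 ≤ g) (hf : Integrable f μ) (hg : Integrable g μ) :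
    ∫ x, √(f x * g x) ∂μ ≤ √(∫ x, f x ∂μ) * √(∫ x, g x ∂μ) := by
  have memLp_sqrt : ∀ h : α → ℝ, 0 ≤ h → Integrable h μ →
      MemLp (fun x => √(h x)) (ENNReal.ofReal 2) μ := fun h h₀ hh => by
    rw [ENNReal.ofReal_ofNat, memLp_two_iff_integrable_sq
      (Real.continuous_sqrt.comp_aestronglyMeasurable hh.1)]
    exact hh.congr (ae_of_all _ fun x => (Real.sq_sqrt (h₀ x)).symm)
  have holder := integral_mul_le_Lp_mul_Lq_of_nonneg Real.HolderConjugate.two_two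
    (ae_of_all _ fun x => Real.sqrt_nonneg (f x)) (ae_of_all _ fun x => Real.sqrt_nonneg (g x))
    (memLp_sqrt f hf₀ hf) (memLp_sqrt g hg₀ hg)
  simp only [← Real.sqrt_mul (hf₀ _), Real.rpow_two, Real.sq_sqrt (hf₀ _),
    Real.sq_sqrt (hg₀ _)] at holder
  rwa [← Real.sqrt_eq_rpow, ← Real.sqrt_eq_rpow] at holder

theorem sq_add_le_add_mul_add_of_le_sqrt_mul {s a b c : ℝ} (hs : 0 ≤ s) (ha : 0 ≤ a) (hb : 0 ≤ b)
    (hc₀ : 0 ≤ c) (hc : c ≤ √a * √b) : (s + c) ^ 2 ≤ (s + a) * (s + b) := by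
  nlinarith [Real.sq_sqrt ha, Real.sq_sqrt hb, sq_nonneg (√a - √b), Real.sqrt_nonneg a,
    Real.sqrt_nonneg b, mul_le_mul_of_nonneg_left hc hs]

theorem one_sub_intervalIntegral_one_sub {t : ℝ} (ht : 0 ≤ t) {g : ℝ → ℝ}
    (hg : IntegrableOn g (Ioc 0 t)) :
    1 - ∫ s in (0:ℝ)..t, (1 - g s) = (1 - t) + ∫ s in Ioc 0 t, g s := by
  rw [intervalIntegral.integral_sub intervalIntegrable_const
    ((intervalIntegrable_iff_integrableOn_Ioc_of_le ht).2 hg),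
    intervalIntegral.integral_const, intervalIntegral.integral_of_le ht, smul_eq_mul, mul_one]
  ring

theorem integrableOn_Ioc_of_mem_Icc {g : ℝ → ℝ} (hg : Measurable g) (hg₀₁ : ∀ x, g x ∈ Icc 0 1)
    (a b : ℝ) : IntegrableOn g (Ioc a b) :=
  Measure.integrableOn_of_bounded (M := 1) measure_Ioc_lt_top.ne hg.aestronglyMeasurable
    (ae_of_all _ fun x => by rw [Real.norm_of_nonneg (hg₀₁ x).1]; exact (hg₀₁ x).2)

/-- **Lemma 2.3.** Symmetrizing two rewards while preserving the distribution of their maximum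
increases the probability of stopping before any time `t`. -/
theorem stmt1
    (t : ℝ) (ht : t ∈ Set.Icc (0:ℝ) 1)
    (τ : ℝ → ℝ) (hτ : Measurable τ)
    (F₁ F₂ : ℝ → ℝ) (hF₁mono : Monotone F₁) (hF₂mono : Monotone F₂)
    (hF₁ : ∀ x, F₁ x ∈ Set.Icc (0:ℝ) 1) (hF₂ : ∀ x, F₂ x ∈ Set.Icc (0:ℝ) 1)
    (p₁ p₂ q : ℝ)
    (hp₁ : p₁ = ∫ s in (0:ℝ)..t, (1 - F₁ (τ s)))
    (hp₂ : p₂ = ∫ s in (0:ℝ)..t, (1 - F₂ (τ s)))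
    (hq : q = ∫ s in (0:ℝ)..t, (1 - Real.sqrt (F₁ (τ s) * F₂ (τ s)))) :
    (1 - q) ^ 2 ≤ (1 - p₁) * (1 - p₂) := by
  obtain ⟨ht₀, ht₁⟩ := ht
  have hg₁ : Measurable fun s => F₁ (τ s) := hF₁mono.measurable.comp hτ
  have hg₂ : Measurable fun s => F₂ (τ s) := hF₂mono.measurable.comp hτ
  have hsqrt : Measurable fun s => √(F₁ (τ s) * F₂ (τ s)) := (hg₁.mul hg₂).sqrt
  have hsqrt₀₁ : ∀ s, √(F₁ (τ s) * F₂ (τ s)) ∈ Icc (0:ℝ) 1 := fun s =>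
    ⟨Real.sqrt_nonneg _, Real.sqrt_le_one.2 (mul_le_one₀ (hF₁ _).2 (hF₂ _).1 (hF₂ _).2)⟩
  have int₁ := integrableOn_Ioc_of_mem_Icc hg₁ (fun s => hF₁ (τ s)) 0 t
  have int₂ := integrableOn_Ioc_of_mem_Icc hg₂ (fun s => hF₂ (τ s)) 0 t
  rw [hp₁, hp₂, hq, one_sub_intervalIntegral_one_sub ht₀ int₁,
    one_sub_intervalIntegral_one_sub ht₀ int₂, one_sub_intervalIntegral_one_sub ht₀
      (integrableOn_Ioc_of_mem_Icc hsqrt hsqrt₀₁ 0 t)]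
  exact sq_add_le_add_mul_add_of_le_sqrt_mul (sub_nonneg.2 ht₁)
    (setIntegral_nonneg measurableSet_Ioc fun s _ => (hF₁ _).1)
    (setIntegral_nonneg measurableSet_Ioc fun s _ => (hF₂ _).1)
    (setIntegral_nonneg measurableSet_Ioc fun s _ => (hsqrt₀₁ s).1)
    (integral_sqrt_mul_le_sqrt_mul_sqrt (fun s => (hF₁ _).1) (fun s => (hF₂ _).1) int₁ int₂)
end

section
/- For every integer n ≥ 1 and every real t ∈ [0,1], it holds that (1 − t + t·2^{−1/n})ⁿ ≥ 2^{−t}. -/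
/-- The pointwise inequality used in the proof of Theorem 3.1 (eq:int):
for every integer `n ≥ 1` and `t ∈ [0,1]`, `(1 - t + t·2^(-1/n))^n ≥ 2^(-t)`. -/
theorem stmt3 (n : ℕ) (hn : 1 ≤ n) (t : ℝ) (ht : t ∈ Set.Icc (0:ℝ) 1) :
    (2:ℝ) ^ (-t) ≤ (1 - t + t * (2:ℝ) ^ (-(1 / (n:ℝ)))) ^ n := by
  obtain ⟨ht0, ht1⟩ := ht
  have hn0 : (n:ℝ) ≠ 0 := Nat.cast_ne_zero.mpr (by omega)
  set a : ℝ := (2:ℝ) ^ (-(1 / (n:ℝ))) with ha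
  have ha0 : 0 ≤ a := (Real.rpow_pos_of_pos (by norm_num) _).le
  have key : a ^ t ≤ 1 - t + t * a := by
    have := Real.geom_mean_le_arith_mean2_weighted (by linarith : (0:ℝ) ≤ 1 - t)
      ht0 (by norm_num : (0:ℝ) ≤ 1) ha0 (by ring)
    simpa using this
  have hat : 0 ≤ a ^ t := Real.rpow_nonneg ha0 t
  calc (2:ℝ) ^ (-t) = (a ^ t) ^ n := by
        rw [ha, ← Real.rpow_natCast (_ ^ t), ← Real.rpow_mul ha0,
          ← Real.rpow_mul (by norm_num : (0:ℝ) ≤ 2)]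
        congr 1
        field_simp
    _ ≤ (1 - t + t * a) ^ n := pow_le_pow_left₀ hat key n
end

section
/- For all integers n ≥ 1 and k ≥ 2, it holds that ∫₀¹ (1 − t + t·2^{−1/n})^{n·k} dt ≥ 1/k. -/
open MeasureTheory

/-- The integral bound (eq:int) in the proof of Theorem 3.1:
`∫₀¹ (1 − t + t·2^{−1/n})^{n·k} dt ≥ 1/k` for all integers `n ≥ 1`, `k ≥ 2`. -/
theorem stmt4 (n k : ℕ) (hn : 1 ≤ n) (hk : 2 ≤ k) :
    (1:ℝ) / k ≤ ∫ t in (0:ℝ)..1, (1 - t + t * (2:ℝ) ^ (-(1 / (n:ℝ)))) ^ (n * k) := by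
  have hn0 : (0:ℝ) < n := by exact_mod_cast hn
  have hk0 : (0:ℝ) < k := by positivity
  set c : ℝ := (2:ℝ) ^ (-(1 / (n:ℝ))) with hc
  have hc0 : 0 < c := Real.rpow_pos_of_pos two_pos _
  have hlogc : Real.log c = -(1 / (n:ℝ)) * Real.log 2 := Real.log_rpow two_pos _
  set a : ℝ := -(k * Real.log 2) with ha
  have ha0 : a < 0 := by
    have : 0 < (k:ℝ) * Real.log 2 := by positivity
    linarith
  -- pointwise bound
  have key : ∀ t ∈ Set.Icc (0:ℝ) 1,
      Real.exp (a * t) ≤ (1 - t + t * c) ^ (n * k) := by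
    intro t ht
    obtain ⟨ht0, ht1⟩ := ht
    have h1 : c ^ t ≤ 1 - t + t * c := by
      have := Real.geom_mean_le_arith_mean2_weighted (sub_nonneg.2 ht1) ht0
        (zero_le_one) hc0.le (by ring)
      simpa [Real.one_rpow] using this
    have h2 : (Real.exp (a * t)) = (c ^ t) ^ (n * k) := by
      rw [← Real.rpow_natCast (c ^ t) (n * k), ← Real.rpow_mul hc0.le,
        Real.rpow_def_of_pos hc0, hlogc]
      congr 1
      push_cast
      field_simp
      ring
    rw [h2]
    exact pow_le_pow_left₀ (Real.rpow_nonneg hc0.le t) h1 (n * k)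
  -- integrability
  have hcont1 : Continuous fun t : ℝ => Real.exp (a * t) := by continuity
  have hcont2 : Continuous fun t : ℝ => (1 - t + t * c) ^ (n * k) := by continuity
  have hmono : (∫ t in (0:ℝ)..1, Real.exp (a * t))
      ≤ ∫ t in (0:ℝ)..1, (1 - t + t * c) ^ (n * k) := by
    apply intervalIntegral.integral_mono_on zero_le_one
      (hcont1.intervalIntegrable _ _) (hcont2.intervalIntegrable _ _)
    exact key
  refine le_trans ?_ hmono
  -- compute the integral
  have hcomp : (∫ t in (0:ℝ)..1, Real.exp (a * t)) = a⁻¹ * (Real.exp a - 1) := by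
    rw [intervalIntegral.integral_comp_mul_left Real.exp ha0.ne]
    simp [integral_exp, smul_eq_mul]
  rw [hcomp]
  have hexpa : Real.exp a = ((2:ℝ) ^ k)⁻¹ := by
    rw [ha, Real.exp_neg]
    congr 1
    rw [Real.exp_nat_mul, Real.exp_log two_pos]
  rw [hexpa]
  have h2k : (4:ℝ) ≤ 2 ^ k := by
    calc (4:ℝ) = 2 ^ 2 := by norm_num
    _ ≤ 2 ^ k := pow_le_pow_right₀ one_le_two hk
  have hinv : ((2:ℝ) ^ k)⁻¹ ≤ 1/4 := by
    rw [inv_le_comm₀ (by positivity) (by norm_num)]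
    simpa using h2k
  have hlog2pos : (0:ℝ) < Real.log 2 := Real.log_pos one_lt_two
  have hL2 : Real.log 2 < 0.6931471808 := Real.log_two_lt_d9
  have heq : a⁻¹ * (((2:ℝ) ^ k)⁻¹ - 1) = (1 - ((2:ℝ)^k)⁻¹) / ((k:ℝ) * Real.log 2) := by
    rw [ha, inv_neg]; ring
  rw [heq, div_le_div_iff₀ hk0 (by positivity)]
  nlinarith [hk0, hlog2pos]
end

section
/- For all integers n ≥ 1 and k ≥ 2, it holds that ∫₀^{2/k} (1 − t + t·2^{−1/n})^{n·k} dt ≥ 1/k. -/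
/-!
By weighted AM–GM, `1 - t + t c ≥ c ^ t` for `t ∈ [0, 1]`, so with `c = 2 ^ (-1/n)` the integrand
dominates the convex function `2 ^ (-t k)`. Its tangent line at the midpoint `t = 1/k` of the
interval has value `1/2` there, and an affine function integrates to length times midpoint value,
which gives `(2/k) · (1/2) = 1/k`.
-/

open intervalIntegral Real

theorem rpow_le_one_sub_add_mul {c t : ℝ} (hc : 0 ≤ c) (ht₀ : 0 ≤ t) (ht₁ : t ≤ 1) :
    c ^ t ≤ 1 - t + t * c := by
  simpa using geom_mean_le_arith_mean2_weighted (sub_nonneg.2 ht₁) ht₀ zero_le_one hc (by ring)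

theorem rpow_mul_natCast_le_pow {c t : ℝ} (hc : 0 ≤ c) (ht₀ : 0 ≤ t) (ht₁ : t ≤ 1) (m : ℕ) :
    c ^ (t * m) ≤ (1 - t + t * c) ^ m := by
  rw [rpow_mul hc, rpow_natCast]
  exact pow_le_pow_left₀ (rpow_nonneg hc t) (rpow_le_one_sub_add_mul hc ht₀ ht₁) m

theorem one_sub_log_two_mul_div_two_le_two_rpow_neg (x : ℝ) :
    (1 - log 2 * (x - 1)) / 2 ≤ (2 : ℝ) ^ (-x) := by
  have h : (2 : ℝ) ^ (-x) = exp (-(log 2 * (x - 1))) / 2 := by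
    rw [rpow_def_of_pos two_pos, show -(log 2 * (x - 1)) = log 2 * -x + log 2 by ring, exp_add,
      exp_log two_pos]
    ring
  rw [h]
  gcongr
  linarith [add_one_le_exp (-(log 2 * (x - 1)))]

theorem integral_affine_eq_mul_midpoint (a b α β : ℝ) :
    ∫ t in a..b, (α + β * (t - (a + b) / 2)) = (b - a) * α := by
  rw [integral_add intervalIntegrable_const
      ((intervalIntegrable_id.sub intervalIntegrable_const).const_mul β),
    intervalIntegral.integral_const_mul, integral_sub intervalIntegrable_id intervalIntegrable_const,
    integral_id, integral_const, integral_const, smul_eq_mul, smul_eq_mul]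
  ring

/-- The integral bound (eq:int-app) in the proof of Lemma 4.1 (Case 1):
`∫₀^{2/k} (1 − t + t·2^{−1/n})^{n·k} dt ≥ 1/k` for all integers `n ≥ 1`, `k ≥ 2`. -/
theorem stmt5 (n k : ℕ) (hn : 1 ≤ n) (hk : 2 ≤ k) :
    (1:ℝ) / k ≤ ∫ t in (0:ℝ)..(2 / (k:ℝ)), (1 - t + t * (2:ℝ) ^ (-(1 / (n:ℝ)))) ^ (n * k) := by
  have hk₀ : (0 : ℝ) < k := by exact_mod_cast (by omega : 0 < k)
  have hn₀ : (n : ℝ) ≠ 0 := by exact_mod_cast (by omega : n ≠ 0)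
  have pointwise : ∀ t ∈ Set.Icc (0 : ℝ) (2 / k),
      (1 - log 2 * (t * k - 1)) / 2 ≤ (1 - t + t * (2 : ℝ) ^ (-(1 / (n : ℝ)))) ^ (n * k) := by
    rintro t ⟨ht₀, ht⟩
    have ht₁ : t ≤ 1 := ht.trans ((div_le_one hk₀).2 (by exact_mod_cast hk))
    calc _ ≤ (2 : ℝ) ^ (-(t * k)) := one_sub_log_two_mul_div_two_le_two_rpow_neg _
      _ = ((2 : ℝ) ^ (-(1 / (n : ℝ)))) ^ (t * ↑(n * k)) := by
        rw [← rpow_mul two_pos.le]; push_cast; field_simp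
      _ ≤ _ := rpow_mul_natCast_le_pow (by positivity) ht₀ ht₁ _
  have tangent_integral : ∫ t in (0 : ℝ)..2 / k, (1 - log 2 * (t * k - 1)) / 2 = 1 / k := by
    convert integral_affine_eq_mul_midpoint 0 (2 / k) (1 / 2) (-(log 2 * k / 2)) using 1
    · congr 1; ext t; field_simp; ring
    · ring
  calc (1 : ℝ) / k = _ := tangent_integral.symm
    _ ≤ _ := integral_mono_on (by positivity) (Continuous.intervalIntegrable (by fun_prop) _ _)
        (Continuous.intervalIntegrable (by fun_prop) _ _) pointwise
end

section
/- Let ε ∈ (0, 1/e], let k := ⌈2·ln(1/ε)⌉, and consider the continuous-time prophet secretary setup with k copies for Borel probability measures F₁,…,Fₙ on [0,∞) with continuous CDFs. Let τ ∈ [0,∞) be a real number such that P(OPT ≤ τ) = 1/2, and let ALG_τ be the value of the single-threshold algorithm with constant threshold τ. Then for every x ≥ 0, P(ALG_τ > x) ≥ (1 − ε)·P(OPT > x), and consequently E[ALG_τ] ≥ (1 − ε)·E[OPT]. -/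
/-!
All `n k` values stay at most the median `τ` of `OPT` with probability `2^{-k}`; otherwise the
algorithm stops at a value above `τ`. This settles the tail `P(ALG > x)` for `x < τ`, because
`2^{-k} ≤ e^{-k/2} ≤ ε`.

For `x ≥ τ`, cut `[0, 1]` into `3k` slots. The events "copy `e` has value above `x`, arrives in
slot `l`, and every other copy above `τ` arrives after that slot" are disjoint and force
`ALG > x`. By independence and Bernoulli's inequality the event for `(e, l)` has probability at
least `P(V_e > x) · 2^{-(l+1)/3} / (3k)`. Summing the geometric series of ratio `2^{-1/3} ≥ 3/4`
and using `∑_e P(V_e > x) = k ∑_i P(V_{i,1} > x) ≥ k P(OPT > x)` gives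
`P(ALG > x) ≥ (1 - 2^{-k}) P(OPT > x)`. Integrating the tails gives the bound on expectations.
-/

open MeasureTheory ProbabilityTheory

lemma Real.one_sub_rpow_le_one_sub_mul {p a : ℝ} (hp : p ≤ 1) (ha0 : 0 ≤ a)
    (ha1 : a ≤ 1) : (1 - p) ^ a ≤ 1 - p * a := by
  simpa [sub_eq_add_neg, mul_comm] using
    rpow_one_add_le_one_add_mul_self (s := -p) (by linarith) ha0 ha1

lemma Finset.prod_one_sub_rpow_le {ι : Type*} (s : Finset ι) {p : ι → ℝ}
    (hp1 : ∀ i ∈ s, p i ≤ 1) {a : ℝ} (ha0 : 0 ≤ a) (ha1 : a ≤ 1) :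
    (∏ i ∈ s, (1 - p i)) ^ a ≤ ∏ i ∈ s, (1 - p i * a) := by
  rw [← Real.finsetProd_rpow _ _ fun i hi => sub_nonneg.mpr (hp1 i hi)]
  exact Finset.prod_le_prod (fun i hi => Real.rpow_nonneg (sub_nonneg.mpr (hp1 i hi)) _)
    fun i hi => Real.one_sub_rpow_le_one_sub_mul (hp1 i hi) ha0 ha1

lemma half_pow_le_of_two_mul_log_le {ε : ℝ} (hε : 0 < ε) {k : ℕ}
    (hk : 2 * Real.log (1 / ε) ≤ k) : (1 / 2 : ℝ) ^ k ≤ ε := by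
  have hlog2 := Real.log_two_gt_d9
  rw [one_div, Real.log_inv] at hk
  calc (1 / 2 : ℝ) ^ k = Real.exp (-(k * Real.log 2)) := by
        rw [← Real.log_rpow two_pos, Real.exp_neg, Real.exp_log (by positivity), Real.rpow_natCast,
          one_div, inv_pow]
    _ ≤ Real.exp (Real.log ε) := Real.exp_le_exp.mpr (by nlinarith [(k.cast_nonneg : (0 : ℝ) ≤ k)])
    _ = ε := Real.exp_log hε

lemma three_mul_one_sub_half_pow_le_sum (k : ℕ) :
    3 * (1 - (1 / 2 : ℝ) ^ k) ≤
      ∑ l ∈ Finset.range (3 * k), ((1 / 2 : ℝ) ^ k) ^ (((l : ℝ) + 1) / ((3 * k : ℕ) : ℝ)) := by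
  rcases Nat.eq_zero_or_pos k with rfl | hk
  · simp
  set ρ : ℝ := (1 / 2 : ℝ) ^ (1 / 3 : ℝ)
  have hρ0 : 0 ≤ ρ := by positivity
  have hρ3 : ρ ^ 3 = 1 / 2 := by
    rw [← Real.rpow_natCast, ← Real.rpow_mul (by norm_num)]
    norm_num
  have hρ : 3 / 4 ≤ ρ := le_of_pow_le_pow_left₀ (n := 3) (by norm_num) hρ0 (by rw [hρ3]; norm_num)
  have hterm : ∀ l : ℕ, ((1 / 2 : ℝ) ^ k) ^ (((l : ℝ) + 1) / ((3 * k : ℕ) : ℝ)) = ρ ^ (l + 1) := by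
    intro l
    rw [← Real.rpow_natCast (1 / 2 : ℝ) k, ← Real.rpow_mul (by norm_num), ← Real.rpow_natCast ρ,
      ← Real.rpow_mul (by norm_num)]
    congr 1
    push_cast
    field_simp
  have hgeom := geom_sum_mul_neg ρ (3 * k)
  rw [pow_mul, hρ3] at hgeom
  have hsum : 0 ≤ ∑ l ∈ Finset.range (3 * k), ρ ^ l := Finset.sum_nonneg fun l _ => by positivity
  simp only [hterm, pow_succ, ← Finset.sum_mul]
  nlinarith

namespace ProbabilityTheory

lemma iIndepFun.measureReal_forall_le {Ω ι : Type*} [MeasurableSpace Ω] {μ : Measure Ω}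
    [Fintype ι] {X : ι → Ω → ℝ} (h : iIndepFun X μ) (τ : ℝ) :
    μ.real {ω | ∀ i, X i ω ≤ τ} = ∏ i, μ.real {ω | X i ω ≤ τ} := by
  rw [Set.ofPred_forall, measureReal_def, h.meas_iInter (s := fun i => {ω | X i ω ≤ τ})
    fun i => ⟨Set.Iic τ, measurableSet_Iic, rfl⟩, ENNReal.toReal_prod]
  rfl

lemma IdentDistrib.measureReal_mem_eq {Ω Ω' γ : Type*} [MeasurableSpace Ω]
    [MeasurableSpace Ω'] [MeasurableSpace γ] {μ : Measure Ω} {ν : Measure Ω'} {f : Ω → γ}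
    {g : Ω' → γ} (h : IdentDistrib f g μ ν) {s : Set γ} (hs : MeasurableSet s) :
    μ.real (f ⁻¹' s) = ν.real (g ⁻¹' s) :=
  congrArg ENNReal.toReal (h.measure_mem_eq hs)

section PairedFamilies

variable {Ω ι β : Type*} [MeasurableSpace Ω] [MeasurableSpace β] {μ : Measure Ω}
  {X Y : ι → Ω → β}

lemma iIndepFun.measure_biInter_preimage_inter_preimage (h : iIndepFun (Sum.elim X Y) μ)
    (S : Finset ι) {A B : ι → Set β} (hA : ∀ i ∈ S, MeasurableSet (A i))
    (hB : ∀ i ∈ S, MeasurableSet (B i)) :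
    μ (⋂ i ∈ S, (X i ⁻¹' A i ∩ Y i ⁻¹' B i)) = ∏ i ∈ S, μ (X i ⁻¹' A i) * μ (Y i ⁻¹' B i) := by
  have hset : ⋂ i ∈ S, (X i ⁻¹' A i ∩ Y i ⁻¹' B i) =
      ⋂ j ∈ S.disjSum S, Sum.elim X Y j ⁻¹' Sum.elim A B j := by
    ext ω
    simp only [Set.mem_iInter, Set.mem_inter_iff, Set.mem_preimage, Sum.forall, Sum.elim_inl,
      Sum.elim_inr, Finset.inl_mem_disjSum, Finset.inr_mem_disjSum, forall_and]
  rw [hset, iIndepFun_iff_measure_inter_preimage_eq_mul.mp h _ ?_, Finset.prod_disjSum,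
    ← Finset.prod_mul_distrib]
  · rfl
  · rintro (i | i) hi
    · exact hA i (Finset.inl_mem_disjSum.mp hi)
    · exact hB i (Finset.inr_mem_disjSum.mp hi)

lemma iIndepFun.measure_preimage_inter_preimage (h : iIndepFun (Sum.elim X Y) μ) (i : ι)
    {A B : Set β} (hA : MeasurableSet A) (hB : MeasurableSet B) :
    μ (X i ⁻¹' A ∩ Y i ⁻¹' B) = μ (X i ⁻¹' A) * μ (Y i ⁻¹' B) := by
  simpa using h.measure_biInter_preimage_inter_preimage {i} (A := fun _ => A) (B := fun _ => B)
    (by simpa using hA) (by simpa using hB)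

lemma iIndepFun.prodMk_of_sumElim (hX : ∀ i, Measurable (X i)) (hY : ∀ i, Measurable (Y i))
    (h : iIndepFun (Sum.elim X Y) μ) : iIndepFun (fun i ω => (X i ω, Y i ω)) μ := by
  rw [iIndepFun_iff_iIndep]
  refine iIndepSets.iIndep (fun i => ((hX i).prodMk (hY i)).comap_le)
    (fun i => {s | ∃ t ∈ Set.image2 (· ×ˢ ·) {A : Set β | MeasurableSet A}
      {B : Set β | MeasurableSet B}, (fun ω => (X i ω, Y i ω)) ⁻¹' t = s})
    (fun i => isPiSystem_prod.comap _) (fun i => ?_) ?_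
  · rw [← generateFrom_prod, MeasurableSpace.comap_generateFrom]
    rfl
  rw [iIndepSets_iff]
  intro S s hs
  choose! t ht hts using hs
  choose! A hA B hB hAB using ht
  have hs : ∀ i ∈ S, s i = X i ⁻¹' A i ∩ Y i ⁻¹' B i := fun i hi => by
    rw [← hts i hi, ← hAB i hi, Set.mk_preimage_prod]
  rw [Set.iInter₂_congr hs, h.measure_biInter_preimage_inter_preimage S hA hB]
  refine Finset.prod_congr rfl fun i hi => ?_
  rw [hs i hi, h.measure_preimage_inter_preimage i (hA i hi) (hB i hi)]

lemma iIndepFun.measureReal_preimage_inter_preimage (h : iIndepFun (Sum.elim X Y) μ) (i : ι)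
    {A B : Set β} (hA : MeasurableSet A) (hB : MeasurableSet B) :
    μ.real (X i ⁻¹' A ∩ Y i ⁻¹' B) = μ.real (X i ⁻¹' A) * μ.real (Y i ⁻¹' B) := by
  simp only [measureReal_def, h.measure_preimage_inter_preimage i hA hB, ENNReal.toReal_mul]

end PairedFamilies

end ProbabilityTheory

lemma setOf_univ_sup'_le {Ω ι : Type*} [Fintype ι] {Y : ι → Ω → ℝ}
    (hne : (Finset.univ : Finset ι).Nonempty) (τ : ℝ) :
    {ω | (Finset.univ.sup' hne fun i => Y i ω) ≤ τ} = {ω | ∀ i, Y i ω ≤ τ} := by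
  ext ω
  simp [Finset.sup'_le_iff]

lemma measureReal_lt_sup'_le_sum {Ω ι : Type*} [MeasurableSpace Ω] {μ : Measure Ω}
    {Y : ι → Ω → ℝ} (s : Finset ι) (hs : s.Nonempty) (x : ℝ) :
    μ.real {ω | x < s.sup' hs fun i => Y i ω} ≤ ∑ i ∈ s, μ.real {ω | x < Y i ω} := by
  have hset : {ω | x < s.sup' hs fun i => Y i ω} = ⋃ i ∈ s, {ω | x < Y i ω} := by
    ext ω
    simp [Finset.lt_sup'_iff]
  rw [hset]
  exact measureReal_biUnion_finset_le _ _

lemma ae_nonneg_of_map_eq {Ω : Type*} [MeasurableSpace Ω] {μ : Measure Ω} {X : Ω → ℝ}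
    {F : Measure ℝ} (hX : Measurable X) (hmap : μ.map X = F) (hF : F (Set.Iio 0) = 0) :
    0 ≤ᵐ[μ] X := by
  have hF' : ∀ᵐ y ∂F, 0 ≤ y := ae_iff.mpr (measure_mono_null (fun y hy => not_le.mp hy) hF)
  exact ae_of_ae_map hX.aemeasurable (hmap ▸ hF')

section Expectation

variable {Ω : Type*} [MeasurableSpace Ω] {μ : Measure Ω} [IsFiniteMeasure μ] {X Y : Ω → ℝ}

lemma mul_integral_le_integral_of_mul_measureReal_lt_le {c : ℝ} (hc : 0 ≤ c)
    (hX : 0 ≤ᵐ[μ] X) (hY : 0 ≤ᵐ[μ] Y) (hXi : Integrable X μ) (hYm : AEMeasurable Y μ)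
    (h : ∀ x, 0 < x → c * μ.real {ω | x < Y ω} ≤ μ.real {ω | x < X ω}) :
    c * ∫ ω, Y ω ∂μ ≤ ∫ ω, X ω ∂μ := by
  have hlin : ENNReal.ofReal c * ∫⁻ ω, ENNReal.ofReal (Y ω) ∂μ ≤
      ∫⁻ ω, ENNReal.ofReal (X ω) ∂μ := by
    rw [lintegral_eq_lintegral_meas_lt μ hY hYm,
      lintegral_eq_lintegral_meas_lt μ hX hXi.aemeasurable,
      ← lintegral_const_mul' _ _ ENNReal.ofReal_ne_top]
    refine setLIntegral_mono' measurableSet_Ioi fun x hx => ?_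
    rw [← ofReal_measureReal, ← ofReal_measureReal, ← ENNReal.ofReal_mul hc]
    exact ENNReal.ofReal_le_ofReal (h x hx)
  rw [integral_eq_lintegral_of_nonneg_ae hY hYm.aestronglyMeasurable,
    integral_eq_lintegral_of_nonneg_ae hX hXi.aestronglyMeasurable]
  calc c * (∫⁻ ω, ENNReal.ofReal (Y ω) ∂μ).toReal
      = (ENNReal.ofReal c * ∫⁻ ω, ENNReal.ofReal (Y ω) ∂μ).toReal := by
        rw [ENNReal.toReal_mul, ENNReal.toReal_ofReal hc]
    _ ≤ _ := ENNReal.toReal_mono (hXi.lintegral_lt_top).ne hlin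

end Expectation

section UniformArrival

variable {Ω : Type*} [MeasurableSpace Ω] {μ : Measure Ω} {T : Ω → ℝ} {a b : ℝ}

lemma measureReal_preimage_of_map_eq_uniform (hT : Measurable T)
    (h : μ.map T = volume.restrict (Set.Icc 0 1)) {s : Set ℝ} (hs : MeasurableSet s) :
    μ.real (T ⁻¹' s) = volume.real (s ∩ Set.Icc 0 1) := by
  rw [measureReal_def, ← Measure.map_apply hT hs, h, Measure.restrict_apply hs]
  rfl

lemma measureReal_preimage_Ioc_of_map_eq_uniform (hT : Measurable T)
    (h : μ.map T = volume.restrict (Set.Icc 0 1)) (hb : 0 ≤ b) (hba : b ≤ a) (ha : a ≤ 1) :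
    μ.real (T ⁻¹' Set.Ioc b a) = a - b := by
  rw [measureReal_preimage_of_map_eq_uniform hT h measurableSet_Ioc,
    Set.inter_eq_left.mpr (Set.Ioc_subset_Icc_self.trans (Set.Icc_subset_Icc hb ha)),
    Real.volume_real_Ioc_of_le hba]

lemma measureReal_preimage_Iic_of_map_eq_uniform (hT : Measurable T)
    (h : μ.map T = volume.restrict (Set.Icc 0 1)) (ha0 : 0 ≤ a) (ha1 : a ≤ 1) :
    μ.real (T ⁻¹' Set.Iic a) = a := by
  have hinter : Set.Iic a ∩ Set.Icc 0 1 = Set.Icc 0 a := by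
    ext y
    simp only [Set.mem_inter_iff, Set.mem_Iic, Set.mem_Icc]
    constructor <;> intro hy <;> constructor <;> grind
  rw [measureReal_preimage_of_map_eq_uniform hT h measurableSet_Iic, hinter,
    Real.volume_real_Icc_of_le ha0, sub_zero]

end UniformArrival

section FirstAbove

variable {Ω J : Type*} {V t : J → Ω → ℝ} {ALG : Ω → ℝ} {τ x : ℝ} {ω : Ω} {m : ℕ}

def SelectsFirstAbove (τ : ℝ) (V t : J → Ω → ℝ) (ALG : Ω → ℝ) (ω : Ω) : Prop :=
  ∀ p, τ < V p ω → (∀ q, τ < V q ω → t p ω ≤ t q ω) → ALG ω = V p ω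

lemma SelectsFirstAbove.exists_eq [Finite J] (h : SelectsFirstAbove τ V t ALG ω)
    (hex : ∃ e, τ < V e ω) : ∃ e, τ < V e ω ∧ ALG ω = V e ω := by
  obtain ⟨e, he, hmin⟩ := Set.exists_min_image {e | τ < V e ω} (fun e => t e ω)
    (Set.toFinite _) hex
  exact ⟨e, he, h e he hmin⟩

lemma SelectsFirstAbove.eq_zero_or_exists_eq [Finite J] (h : SelectsFirstAbove τ V t ALG ω)
    (hnone : (∀ e, ¬ τ < V e ω) → ALG ω = 0) :
    ALG ω = 0 ∨ ∃ e, τ < V e ω ∧ ALG ω = V e ω := by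
  by_cases hex : ∃ e, τ < V e ω
  · exact Or.inr (h.exists_eq hex)
  · exact Or.inl (hnone (not_exists.mp hex))

def slotWin (τ x : ℝ) (m : ℕ) (V t : J → Ω → ℝ) (e : J) (l : ℕ) : Set Ω :=
  {ω | x < V e ω ∧ t e ω ∈ Set.Ioc (l / m : ℝ) ((l + 1) / m) ∧
    ∀ f ≠ e, V f ω ≤ τ ∨ ((l : ℝ) + 1) / m < t f ω}

def slotBox [DecidableEq J] (τ x : ℝ) (m : ℕ) (e : J) (l : ℕ) (f : J) : Set (ℝ × ℝ) :=
  if f = e then Set.Ioi x ×ˢ Set.Ioc (l / m : ℝ) ((l + 1) / m)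
  else (Set.Ioi τ ×ˢ Set.Iic (((l : ℝ) + 1) / m))ᶜ

lemma measurableSet_slotBox [DecidableEq J] (e : J) (l : ℕ) (f : J) :
    MeasurableSet (slotBox τ x m e l f) := by
  unfold slotBox
  split_ifs
  · exact measurableSet_Ioi.prod measurableSet_Ioc
  · exact (measurableSet_Ioi.prod measurableSet_Iic).compl

lemma slotWin_eq_iInter_preimage [DecidableEq J] (e : J) (l : ℕ) :
    slotWin τ x m V t e l = ⋂ f, (fun ω => (V f ω, t f ω)) ⁻¹' slotBox τ x m e l f := by
  ext ω
  simp only [slotWin, slotBox, Set.mem_ofPred_eq, Set.mem_iInter, Set.mem_preimage]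
  have hbox : ∀ f ≠ e, (V f ω, t f ω) ∈ (Set.Ioi τ ×ˢ Set.Iic (((l : ℝ) + 1) / m))ᶜ ↔
      V f ω ≤ τ ∨ ((l : ℝ) + 1) / m < t f ω := fun f _ => by
    simp only [Set.mem_compl_iff, Set.mem_prod, Set.mem_Ioi, Set.mem_Iic, not_and_or, not_lt,
      not_le]
  constructor
  · rintro ⟨hV, ht, hrest⟩ f
    split_ifs with hfe
    · subst hfe
      exact ⟨hV, ht⟩
    · exact (hbox f hfe).mpr (hrest f hfe)
  · intro h
    have he := h e
    rw [if_pos rfl] at he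
    refine ⟨he.1, he.2, fun f hfe => (hbox f hfe).mp ?_⟩
    simpa [hfe] using h f

lemma SelectsFirstAbove.lt_of_mem_slotWin {e : J} {l : ℕ} (h : SelectsFirstAbove τ V t ALG ω)
    (hτx : τ ≤ x) (hω : ω ∈ slotWin τ x m V t e l) : x < ALG ω := by
  obtain ⟨hxV, ht, hrest⟩ := hω
  rw [h e (hτx.trans_lt hxV) fun f hf => ?_]
  · exact hxV
  rcases eq_or_ne f e with rfl | hfe
  · exact le_rfl
  · rcases hrest f hfe with hle | hlt
    · exact absurd hf hle.not_gt
    · exact ht.2.trans hlt.le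

lemma pairwiseDisjoint_slotWin (hτx : τ ≤ x) (hm : 0 < m) :
    (Set.univ : Set (J × ℕ)).PairwiseDisjoint fun p => slotWin τ x m V t p.1 p.2 := by
  rintro ⟨e, l⟩ - ⟨e', l'⟩ - hne
  rw [Function.onFun, Set.disjoint_left]
  rintro ω ⟨hV, ht, hrest⟩ ⟨hV', ht', hrest'⟩
  have hm' : (0 : ℝ) < m := Nat.cast_pos.mpr hm
  rcases eq_or_ne e e' with rfl | hee
  · have h₁ : l < l' + 1 := by
      exact_mod_cast (div_lt_div_iff_of_pos_right hm').mp (ht.1.trans_le ht'.2)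
    have h₂ : l' < l + 1 := by
      exact_mod_cast (div_lt_div_iff_of_pos_right hm').mp (ht'.1.trans_le ht.2)
    exact hne (by rw [show l = l' by omega])
  · have h₁ := (hrest' e hee).resolve_left (hτx.trans_lt hV).not_ge
    have h₂ := (hrest e' (Ne.symm hee)).resolve_left (hτx.trans_lt hV').not_ge
    linarith [ht.2, ht'.2]

variable [MeasurableSpace Ω] {μ : Measure Ω}

lemma one_sub_measureReal_forall_le_le [Finite J] [IsProbabilityMeasure μ]
    (hV : ∀ e, Measurable (V e)) (hsel : ∀ᵐ ω ∂μ, SelectsFirstAbove τ V t ALG ω)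
    (hxτ : x ≤ τ) :
    1 - μ.real {ω | ∀ e, V e ω ≤ τ} ≤ μ.real {ω | x < ALG ω} := by
  have hmeas : MeasurableSet {ω | ∀ e, V e ω ≤ τ} := by
    simp only [Set.ofPred_forall]
    exact MeasurableSet.iInter fun e => measurableSet_le (hV e) measurable_const
  have hsub : ∀ᵐ ω ∂μ, ω ∈ {ω | ∀ e, V e ω ≤ τ}ᶜ → ω ∈ {ω | x < ALG ω} := by
    filter_upwards [hsel] with ω hω hmem
    simp only [Set.mem_compl_iff, Set.mem_ofPred_eq, not_forall, not_le] at hmem ⊢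
    obtain ⟨e, he, hALG⟩ := hω.exists_eq hmem
    linarith
  rw [← probReal_compl_eq_one_sub hmeas]
  exact ENNReal.toReal_mono (measure_ne_top _ _) (measure_mono_ae hsub)

lemma measurableSet_slotWin [Finite J] (hV : ∀ e, Measurable (V e)) (ht : ∀ e, Measurable (t e))
    (e : J) (l : ℕ) : MeasurableSet (slotWin τ x m V t e l) := by
  classical
  rw [slotWin_eq_iInter_preimage]
  exact MeasurableSet.iInter fun f => (hV f).prodMk (ht f) (measurableSet_slotBox e l f)

lemma measureReal_slotWin [Fintype J] [DecidableEq J] [IsProbabilityMeasure μ]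
    (hV : ∀ e, Measurable (V e)) (ht : ∀ e, Measurable (t e))
    (hindep : iIndepFun (Sum.elim V t) μ)
    (hunif : ∀ e, μ.map (t e) = volume.restrict (Set.Icc 0 1)) (e : J) {l : ℕ} (hl : l < m) :
    μ.real (slotWin τ x m V t e l) = μ.real {ω | x < V e ω} * (1 / m) *
      ∏ f ∈ Finset.univ.erase e, (1 - μ.real {ω | τ < V f ω} * ((l + 1) / m)) := by
  have hm : (0 : ℝ) < m := by exact_mod_cast (Nat.zero_le l).trans_lt hl
  have hlm : (l : ℝ) / m ≤ (l + 1) / m := by gcongr; linarith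
  have hlm1 : ((l : ℝ) + 1) / m ≤ 1 := by
    rw [div_le_one hm]
    exact_mod_cast hl
  rw [slotWin_eq_iInter_preimage, measureReal_def,
    (hindep.prodMk_of_sumElim hV ht).meas_iInter fun f => ⟨_, measurableSet_slotBox e l f, rfl⟩,
    ENNReal.toReal_prod, ← Finset.mul_prod_erase _ _ (Finset.mem_univ e)]
  congr 1
  · rw [slotBox, if_pos rfl, Set.mk_preimage_prod, ← measureReal_def,
      hindep.measureReal_preimage_inter_preimage e measurableSet_Ioi measurableSet_Ioc,
      measureReal_preimage_Ioc_of_map_eq_uniform (ht e) (hunif e) (by positivity) hlm hlm1]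
    congr 1
    field_simp
    ring
  · refine Finset.prod_congr rfl fun f hf => ?_
    rw [slotBox, if_neg (Finset.ne_of_mem_erase hf), Set.preimage_compl, ← measureReal_def,
      probReal_compl_eq_one_sub (((hV f).prodMk (ht f)) (measurableSet_Ioi.prod measurableSet_Iic)),
      Set.mk_preimage_prod,
      hindep.measureReal_preimage_inter_preimage f measurableSet_Ioi measurableSet_Iic,
      measureReal_preimage_Iic_of_map_eq_uniform (ht f) (hunif f) (by positivity) hlm1]
    rfl

lemma measureReal_forall_le_eq_prod_one_sub [Fintype J] [IsProbabilityMeasure μ]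
    (hV : ∀ e, Measurable (V e)) (hindep : iIndepFun V μ) :
    μ.real {ω | ∀ e, V e ω ≤ τ} = ∏ e, (1 - μ.real {ω | τ < V e ω}) := by
  rw [hindep.measureReal_forall_le]
  refine Finset.prod_congr rfl fun e _ => ?_
  rw [← probReal_compl_eq_one_sub (measurableSet_lt measurable_const (hV e))]
  simp only [Set.compl_ofPred, not_lt]

lemma mul_rpow_le_measureReal_slotWin [Fintype J] [IsProbabilityMeasure μ]
    (hV : ∀ e, Measurable (V e)) (ht : ∀ e, Measurable (t e))
    (hindep : iIndepFun (Sum.elim V t) μ)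
    (hunif : ∀ e, μ.map (t e) = volume.restrict (Set.Icc 0 1)) (e : J) {l : ℕ} (hl : l < m) :
    μ.real {ω | x < V e ω} * (1 / m) * μ.real {ω | ∀ e, V e ω ≤ τ} ^ (((l : ℝ) + 1) / m) ≤
      μ.real (slotWin τ x m V t e l) := by
  classical
  set p : J → ℝ := fun e => μ.real {ω | τ < V e ω}
  set a : ℝ := ((l : ℝ) + 1) / m
  have ha1 : a ≤ 1 := by
    rw [div_le_one (by exact_mod_cast (Nat.zero_le l).trans_lt hl)]
    exact_mod_cast hl
  have hfactor : ∀ f, 0 ≤ 1 - p f * a := fun f =>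
    sub_nonneg.mpr (mul_le_one₀ measureReal_le_one (by positivity) ha1)
  rw [measureReal_slotWin hV ht hindep hunif e hl,
    measureReal_forall_le_eq_prod_one_sub hV (hindep.precomp (g := Sum.inl) Sum.inl_injective)]
  gcongr
  calc (∏ f, (1 - p f)) ^ a
      ≤ ∏ f, (1 - p f * a) :=
        Finset.prod_one_sub_rpow_le _ (fun f _ => measureReal_le_one) (by positivity) ha1
    _ ≤ ∏ f ∈ Finset.univ.erase e, (1 - p f * a) :=
        Finset.prod_le_prod_of_subset_of_le_one (Finset.erase_subset _ _) (fun f _ => hfactor f)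
          fun f _ _ => sub_le_self _ (by positivity)

lemma sum_measureReal_slotWin_le [Finite J] [IsFiniteMeasure μ]
    (hV : ∀ e, Measurable (V e)) (ht : ∀ e, Measurable (t e))
    (hsel : ∀ᵐ ω ∂μ, SelectsFirstAbove τ V t ALG ω) (hτx : τ ≤ x) (hm : 0 < m)
    (S : Finset (J × ℕ)) :
    ∑ q ∈ S, μ.real (slotWin τ x m V t q.1 q.2) ≤ μ.real {ω | x < ALG ω} := by
  rw [← measureReal_biUnion_finset ((pairwiseDisjoint_slotWin hτx hm).subset (Set.subset_univ _))
    fun q _ => measurableSet_slotWin hV ht q.1 q.2]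
  have hsub : ∀ᵐ ω ∂μ, ω ∈ ⋃ q ∈ S, slotWin τ x m V t q.1 q.2 → ω ∈ {ω | x < ALG ω} := by
    filter_upwards [hsel] with ω hω hmem
    obtain ⟨q, -, hq⟩ := Set.mem_iUnion₂.mp hmem
    exact hω.lt_of_mem_slotWin hτx hq
  exact ENNReal.toReal_mono (measure_ne_top _ _) (measure_mono_ae hsub)

theorem sum_measureReal_lt_mul_le_measureReal_lt [Fintype J] [IsProbabilityMeasure μ]
    (hV : ∀ e, Measurable (V e)) (ht : ∀ e, Measurable (t e))
    (hindep : iIndepFun (Sum.elim V t) μ)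
    (hunif : ∀ e, μ.map (t e) = volume.restrict (Set.Icc 0 1))
    (hsel : ∀ᵐ ω ∂μ, SelectsFirstAbove τ V t ALG ω) (hτx : τ ≤ x) (hm : 0 < m) :
    (∑ e, μ.real {ω | x < V e ω}) *
        (1 / m * ∑ l ∈ Finset.range m, μ.real {ω | ∀ e, V e ω ≤ τ} ^ (((l : ℝ) + 1) / m)) ≤
      μ.real {ω | x < ALG ω} :=
  calc _ = ∑ q ∈ Finset.univ ×ˢ Finset.range m, μ.real {ω | x < V q.1 ω} * (1 / m) *
        μ.real {ω | ∀ e, V e ω ≤ τ} ^ (((q.2 : ℝ) + 1) / m) := by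
        rw [Finset.sum_product, Finset.sum_mul]
        refine Finset.sum_congr rfl fun e _ => ?_
        rw [Finset.mul_sum, Finset.mul_sum]
        exact Finset.sum_congr rfl fun l _ => by ring
    _ ≤ ∑ q ∈ Finset.univ ×ˢ Finset.range m, μ.real (slotWin τ x m V t q.1 q.2) :=
        Finset.sum_le_sum fun q hq => mul_rpow_le_measureReal_slotWin hV ht hindep hunif q.1
          (Finset.mem_range.mp (Finset.mem_product.mp hq).2)
    _ ≤ _ := sum_measureReal_slotWin_le hV ht hsel hτx hm _

lemma ae_nonneg_of_selectsFirstAbove [Finite J] (hτ : 0 ≤ τ)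
    (hsel : ∀ᵐ ω ∂μ, SelectsFirstAbove τ V t ALG ω)
    (hnone : ∀ᵐ ω ∂μ, (∀ e, ¬ τ < V e ω) → ALG ω = 0) : 0 ≤ᵐ[μ] ALG := by
  filter_upwards [hsel, hnone] with ω hω h0
  rcases hω.eq_zero_or_exists_eq h0 with h | ⟨e, he, h⟩
  · exact h.ge
  · change 0 ≤ ALG ω
    linarith

lemma integrable_of_selectsFirstAbove [Fintype J] (hALG : AEStronglyMeasurable ALG μ)
    (hVi : ∀ e, Integrable (V e) μ) (hsel : ∀ᵐ ω ∂μ, SelectsFirstAbove τ V t ALG ω)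
    (hnone : ∀ᵐ ω ∂μ, (∀ e, ¬ τ < V e ω) → ALG ω = 0) : Integrable ALG μ := by
  refine (integrable_finsetSum Finset.univ fun e _ => (hVi e).norm).mono' hALG ?_
  filter_upwards [hsel, hnone] with ω hω h0
  rcases hω.eq_zero_or_exists_eq h0 with h | ⟨e, -, h⟩
  · rw [h, norm_zero]
    exact Finset.sum_nonneg fun e _ => norm_nonneg _
  · rw [h]
    exact Finset.single_le_sum (f := fun e => ‖V e ω‖) (fun e _ => norm_nonneg _)
      (Finset.mem_univ e)

end FirstAbove

section Copies

variable {Ω ι : Type*} [MeasurableSpace Ω] {μ : Measure Ω} [Fintype ι] {k : ℕ}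
  {V t : ι → Fin k → Ω → ℝ} {ALG : Ω → ℝ} {τ : ℝ} {j₀ : Fin k}

lemma measureReal_forall_copies_le (hindep : iIndepFun (fun p : ι × Fin k => V p.1 p.2) μ)
    (hident : ∀ i j, IdentDistrib (V i j) (V i j₀) μ μ) (τ : ℝ) :
    μ.real {ω | ∀ p : ι × Fin k, V p.1 p.2 ω ≤ τ} = μ.real {ω | ∀ i, V i j₀ ω ≤ τ} ^ k := by
  have hcopy : iIndepFun (fun i => V i j₀) μ :=
    hindep.precomp (g := fun i => (i, j₀)) (Prod.mk_left_injective j₀)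
  rw [hindep.measureReal_forall_le, hcopy.measureReal_forall_le, Fintype.prod_prod_type,
    ← Finset.prod_pow]
  refine Finset.prod_congr rfl fun i _ => ?_
  calc ∏ j, μ.real {ω | V i j ω ≤ τ} = ∏ _j : Fin k, μ.real {ω | V i j₀ ω ≤ τ} :=
        Finset.prod_congr rfl fun j _ => (hident i j).measureReal_mem_eq measurableSet_Iic
    _ = _ := by rw [Finset.prod_const, Finset.card_univ, Fintype.card_fin]

lemma sum_measureReal_copies_lt (hident : ∀ i j, IdentDistrib (V i j) (V i j₀) μ μ) (x : ℝ) :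
    ∑ p : ι × Fin k, μ.real {ω | x < V p.1 p.2 ω} = k * ∑ i, μ.real {ω | x < V i j₀ ω} := by
  rw [Fintype.sum_prod_type, Finset.mul_sum]
  refine Finset.sum_congr rfl fun i _ => ?_
  calc ∑ j, μ.real {ω | x < V i j ω} = ∑ _j : Fin k, μ.real {ω | x < V i j₀ ω} :=
        Finset.sum_congr rfl fun j _ => (hident i j).measureReal_mem_eq measurableSet_Ioi
    _ = _ := by rw [Finset.sum_const, Finset.card_univ, Fintype.card_fin, nsmul_eq_mul]

lemma integrable_of_integrable_sup' (hne : (Finset.univ : Finset ι).Nonempty)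
    (hV : ∀ i j, Measurable (V i j)) (hV0 : ∀ i, 0 ≤ᵐ[μ] V i j₀)
    (hident : ∀ i j, IdentDistrib (V i j) (V i j₀) μ μ)
    (hint : Integrable (fun ω => Finset.univ.sup' hne fun i => V i j₀ ω) μ) (i : ι) (j : Fin k) :
    Integrable (V i j) μ := by
  refine (hident i j).integrable_iff.mpr <| hint.mono' (hV i j₀).aestronglyMeasurable ?_
  filter_upwards [hV0 i] with ω hω
  rw [Real.norm_of_nonneg hω]
  exact Finset.le_sup' (fun i => V i j₀ ω) (Finset.mem_univ i)

theorem one_sub_half_pow_mul_measureReal_lt_le [IsProbabilityMeasure μ]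
    (hV : ∀ i j, Measurable (V i j)) (ht : ∀ i j, Measurable (t i j))
    (hident : ∀ i j, IdentDistrib (V i j) (V i j₀) μ μ)
    (hunif : ∀ i j, μ.map (t i j) = volume.restrict (Set.Icc 0 1))
    (hindep : iIndepFun
      (Sum.elim (fun p : ι × Fin k => V p.1 p.2) (fun p : ι × Fin k => t p.1 p.2)) μ)
    (hmed : μ.real {ω | ∀ i, V i j₀ ω ≤ τ} = 1 / 2)
    (hsel : ∀ᵐ ω ∂μ, SelectsFirstAbove τ (fun p : ι × Fin k => V p.1 p.2)
      (fun p : ι × Fin k => t p.1 p.2) ALG ω)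
    (hne : (Finset.univ : Finset ι).Nonempty) (x : ℝ) :
    (1 - (1 / 2 : ℝ) ^ k) * μ.real {ω | x < Finset.univ.sup' hne fun i => V i j₀ ω} ≤
      μ.real {ω | x < ALG ω} := by
  have hall : μ.real {ω | ∀ p : ι × Fin k, V p.1 p.2 ω ≤ τ} = (1 / 2) ^ k := by
    rw [measureReal_forall_copies_le (hindep.precomp (g := Sum.inl) Sum.inl_injective) hident,
      hmed]
  have hhalf : 0 ≤ 1 - (1 / 2 : ℝ) ^ k := sub_nonneg.mpr (pow_le_one₀ (by norm_num) (by norm_num))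
  rcases lt_or_ge x τ with hxτ | hτx
  · calc _ ≤ 1 - (1 / 2 : ℝ) ^ k := mul_le_of_le_one_right hhalf measureReal_le_one
      _ ≤ _ := hall ▸ one_sub_measureReal_forall_le_le (fun p : ι × Fin k => hV p.1 p.2) hsel hxτ.le
  rcases Nat.eq_zero_or_pos k with rfl | hk
  · simp
  have htail := sum_measureReal_lt_mul_le_measureReal_lt (fun p : ι × Fin k => hV p.1 p.2)
    (fun p : ι × Fin k => ht p.1 p.2) hindep (fun p : ι × Fin k => hunif p.1 p.2) hsel hτx
    (m := 3 * k) (by omega)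
  rw [sum_measureReal_copies_lt hident, hall] at htail
  have hsum := three_mul_one_sub_half_pow_le_sum k
  have hk3 : (k : ℝ) * (1 / ((3 * k : ℕ) : ℝ)) = 1 / 3 := by
    push_cast
    field_simp
  have hq : 0 ≤ ∑ i, μ.real {ω | x < V i j₀ ω} := Finset.sum_nonneg fun i _ => measureReal_nonneg
  calc _ ≤ (1 - (1 / 2 : ℝ) ^ k) * ∑ i, μ.real {ω | x < V i j₀ ω} :=
        mul_le_mul_of_nonneg_left (measureReal_lt_sup'_le_sum _ hne x) hhalf
    _ ≤ k * (∑ i, μ.real {ω | x < V i j₀ ω}) * (1 / ((3 * k : ℕ) : ℝ) *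
          ∑ l ∈ Finset.range (3 * k), ((1 / 2 : ℝ) ^ k) ^ (((l : ℝ) + 1) / ((3 * k : ℕ) : ℝ))) := by
        rw [mul_comm (k : ℝ), mul_assoc, ← mul_assoc (k : ℝ), hk3]
        nlinarith
    _ ≤ _ := htail

end Copies

theorem stmt6_general
    (ε : ℝ) (hε : 0 < ε) (hε' : ε ≤ 1 / Real.exp 1)
    (k : ℕ) (hkdef : k = ⌈2 * Real.log (1 / ε)⌉₊) (hk0 : 0 < k)
    (n : ℕ) (hn : 0 < n)
    (Ω : Type*) [MeasurableSpace Ω] (μ : Measure Ω) [IsProbabilityMeasure μ]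
    -- the reward distributions: Borel probability measures on [0,∞) with continuous CDFs
    (F : Fin n → Measure ℝ)
    (hFsupp : ∀ i, F i (Set.Iio 0) = 0)
    -- the rewards and their arrival times
    (V : Fin n → Fin k → Ω → ℝ) (t : Fin n → Fin k → Ω → ℝ)
    (hmV : ∀ i j, Measurable (V i j)) (hmt : ∀ i j, Measurable (t i j))
    (hVdist : ∀ i j, Measure.map (V i j) μ = F i)
    (htdist : ∀ i j, Measure.map (t i j) μ = volume.restrict (Set.Icc (0:ℝ) 1))
    -- all the rewards and arrival times are mutually independent
    (hindep : iIndepFun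
      (Sum.elim (fun p : Fin n × Fin k => V p.1 p.2) (fun p : Fin n × Fin k => t p.1 p.2)) μ)
    -- the offline benchmark OPT = max_{1 ≤ i ≤ n} V_{i,1}
    (OPT : Ω → ℝ)
    (hOPT : ∀ ω, OPT ω =
      Finset.univ.sup' ⟨⟨0, hn⟩, Finset.mem_univ _⟩ (fun i => V i ⟨0, hk0⟩ ω))
    -- the threshold: a nonnegative median of OPT
    (τ : ℝ) (hτ : 0 ≤ τ)
    (hmed : μ {ω | OPT ω ≤ τ} = 1/2)
    -- ALG is the value of the single-threshold algorithm with constant threshold τ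
    (ALG : Ω → ℝ) (hmALG : Measurable ALG)
    (hALGnone : ∀ᵐ ω ∂μ, (∀ p : Fin n × Fin k, ¬ τ < V p.1 p.2 ω) → ALG ω = 0)
    (hALGsel : ∀ᵐ ω ∂μ, ∀ p : Fin n × Fin k, τ < V p.1 p.2 ω →
      (∀ q : Fin n × Fin k, τ < V q.1 q.2 ω → t p.1 p.2 ω ≤ t q.1 q.2 ω) →
      ALG ω = V p.1 p.2 ω) :
    (∀ x : ℝ, 0 ≤ x →
        (1 - ε) * (μ {ω | x < OPT ω}).toReal ≤ (μ {ω | x < ALG ω}).toReal) ∧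
      (1 - ε) * ∫ ω, OPT ω ∂μ ≤ ∫ ω, ALG ω ∂μ := by
  have hne : (Finset.univ : Finset (Fin n)).Nonempty := ⟨⟨0, hn⟩, Finset.mem_univ _⟩
  obtain rfl : OPT = fun ω => Finset.univ.sup' hne fun i => V i ⟨0, hk0⟩ ω := funext hOPT
  set j₀ : Fin k := ⟨0, hk0⟩
  have hident : ∀ i j, IdentDistrib (V i j) (V i j₀) μ μ := fun i j =>
    ⟨(hmV i j).aemeasurable, (hmV i j₀).aemeasurable, (hVdist i j).trans (hVdist i j₀).symm⟩
  have hV0 : ∀ i j, 0 ≤ᵐ[μ] V i j := fun i j =>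
    ae_nonneg_of_map_eq (hmV i j) (hVdist i j) (hFsupp i)
  have hmed' : μ.real {ω | ∀ i, V i j₀ ω ≤ τ} = 1 / 2 := by
    rw [measureReal_def, ← setOf_univ_sup'_le hne, hmed]
    norm_num
  have hsmall : (1 / 2 : ℝ) ^ k ≤ ε := half_pow_le_of_two_mul_log_le hε (hkdef ▸ Nat.le_ceil _)
  have hε1 : 0 ≤ 1 - ε := by
    linarith [(div_le_one (Real.exp_pos 1)).mpr (Real.one_le_exp zero_le_one)]
  have htail : ∀ x : ℝ, 0 ≤ x →
      (1 - ε) * μ.real {ω | x < Finset.univ.sup' hne fun i => V i j₀ ω} ≤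
        μ.real {ω | x < ALG ω} :=
    fun x _ => (mul_le_mul_of_nonneg_right (by linarith) measureReal_nonneg).trans
      (one_sub_half_pow_mul_measureReal_lt_le hmV hmt hident htdist hindep hmed' hALGsel hne x)
  refine ⟨htail, ?_⟩
  have hALG0 := ae_nonneg_of_selectsFirstAbove hτ hALGsel hALGnone
  by_cases hint : Integrable (fun ω => Finset.univ.sup' hne fun i => V i j₀ ω) μ
  swap
  · rw [integral_undef hint, mul_zero]
    exact integral_nonneg_of_ae hALG0
  have hOPT0 : 0 ≤ᵐ[μ] fun ω => Finset.univ.sup' hne fun i => V i j₀ ω := by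
    filter_upwards [hV0 ⟨0, hn⟩ j₀] with ω hω
    exact hω.trans (Finset.le_sup' (fun i => V i j₀ ω) (Finset.mem_univ _))
  have hALGint := integrable_of_selectsFirstAbove hmALG.aestronglyMeasurable
    (fun p : Fin n × Fin k => integrable_of_integrable_sup' hne hmV (hV0 · j₀) hident hint p.1 p.2)
    hALGsel hALGnone
  exact mul_integral_le_integral_of_mul_measureReal_lt_le hε1 hALG0 hOPT0 hALGint
    hint.aemeasurable fun x hx => htail x hx.le

/-- **Theorem 3.1, upper bound.** In the continuous-time prophet secretary setup with
`k = ⌈2 ln(1/ε)⌉` copies, the single-threshold algorithm whose constant threshold `τ` is the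
median of `OPT = max_i V_{i,1}` satisfies `P(ALG > x) ≥ (1−ε)·P(OPT > x)` for every `x ≥ 0`,
and consequently `E[ALG] ≥ (1−ε)·E[OPT]`. -/
theorem stmt6
    (ε : ℝ) (hε : 0 < ε) (hε' : ε ≤ 1 / Real.exp 1)
    (k : ℕ) (hkdef : k = ⌈2 * Real.log (1 / ε)⌉₊) (hk0 : 0 < k)
    (n : ℕ) (hn : 0 < n)
    (Ω : Type*) [MeasurableSpace Ω] (μ : Measure Ω) [IsProbabilityMeasure μ]
    -- the reward distributions: Borel probability measures on [0,∞) with continuous CDFs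
    (F : Fin n → Measure ℝ) (hFprob : ∀ i, IsProbabilityMeasure (F i))
    (hFsupp : ∀ i, F i (Set.Iio 0) = 0)
    (hFcont : ∀ i, Continuous fun x : ℝ => (F i (Set.Iic x)).toReal)
    -- the rewards and their arrival times
    (V : Fin n → Fin k → Ω → ℝ) (t : Fin n → Fin k → Ω → ℝ)
    (hmV : ∀ i j, Measurable (V i j)) (hmt : ∀ i j, Measurable (t i j))
    (hVdist : ∀ i j, Measure.map (V i j) μ = F i)
    (htdist : ∀ i j, Measure.map (t i j) μ = volume.restrict (Set.Icc (0:ℝ) 1))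
    -- all the rewards and arrival times are mutually independent
    (hindep : iIndepFun
      (Sum.elim (fun p : Fin n × Fin k => V p.1 p.2) (fun p : Fin n × Fin k => t p.1 p.2)) μ)
    -- the offline benchmark OPT = max_{1 ≤ i ≤ n} V_{i,1}
    (OPT : Ω → ℝ)
    (hOPT : ∀ ω, OPT ω =
      Finset.univ.sup' ⟨⟨0, hn⟩, Finset.mem_univ _⟩ (fun i => V i ⟨0, hk0⟩ ω))
    -- the threshold: a nonnegative median of OPT
    (τ : ℝ) (hτ : 0 ≤ τ)
    (hmed : μ {ω | OPT ω ≤ τ} = 1/2)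
    -- ALG is the value of the single-threshold algorithm with constant threshold τ
    (ALG : Ω → ℝ) (hmALG : Measurable ALG)
    (hALGnone : ∀ᵐ ω ∂μ, (∀ p : Fin n × Fin k, ¬ τ < V p.1 p.2 ω) → ALG ω = 0)
    (hALGsel : ∀ᵐ ω ∂μ, ∀ p : Fin n × Fin k, τ < V p.1 p.2 ω →
      (∀ q : Fin n × Fin k, τ < V q.1 q.2 ω → t p.1 p.2 ω ≤ t q.1 q.2 ω) →
      ALG ω = V p.1 p.2 ω) :
    (∀ x : ℝ, 0 ≤ x →
        (1 - ε) * (μ {ω | x < OPT ω}).toReal ≤ (μ {ω | x < ALG ω}).toReal) ∧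
      (1 - ε) * ∫ ω, OPT ω ∂μ ≤ ∫ ω, ALG ω ∂μ :=
  stmt6_general ε hε hε' k hkdef hk0 n hn Ω μ F hFsupp V t hmV hmt hVdist htdist hindep OPT hOPT τ
    hτ hmed ALG hmALG hALGnone hALGsel
end

section
/- For every integer k ≥ 2 and every real t with 2/k ≤ t ≤ 1, it holds that (1 − t + ln(e·k·t/2)/k)^k ≤ 1/(t·k). -/
/-- The key chain of inequalities in Case 2 of the proof of Lemma 4.1:
for every integer `k ≥ 2` and every `t ∈ [2/k, 1]`,
`(1 − t + ln(e·k·t/2)/k)^k ≤ 1/(t·k)`. -/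
theorem stmt8 (k : ℕ) (hk : 2 ≤ k) (t : ℝ) (ht₁ : 2 / (k:ℝ) ≤ t) (ht₂ : t ≤ 1) :
    (1 - t + Real.log (Real.exp 1 * k * t / 2) / k) ^ k ≤ 1 / (t * k) := by
  have hkr : (2:ℝ) ≤ (k:ℝ) := by exact_mod_cast hk
  have hk0 : (0:ℝ) < (k:ℝ) := by linarith
  have ht0 : 0 < t := lt_of_lt_of_le (by positivity) ht₁
  have hx : (2:ℝ) ≤ t * (k:ℝ) := by
    rw [div_le_iff₀ hk0] at ht₁; linarith
  set x := t * (k:ℝ) with hxdef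
  have hx2 : (1:ℝ) ≤ x / 2 := by linarith
  have hlog : Real.log (Real.exp 1 * k * t / 2) = 1 + Real.log (x / 2) := by
    have hrw : Real.exp 1 * (k:ℝ) * t / 2 = Real.exp 1 * (x / 2) := by
      rw [hxdef]; ring
    rw [hrw, Real.log_mul (Real.exp_ne_zero 1) (by linarith), Real.log_exp]
  set b := 1 - t + Real.log (Real.exp 1 * k * t / 2) / k with hbdef
  have hlx0 : 0 ≤ Real.log (x / 2) := Real.log_nonneg hx2
  have hb0 : 0 ≤ b := by
    rw [hbdef, hlog]
    have h1 : 0 ≤ (1 + Real.log (x / 2)) / (k:ℝ) := by positivity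
    linarith [h1]
  have hb1 : b ≤ Real.exp (b - 1) := by
    have := Real.add_one_le_exp (b - 1); linarith
  have h1 : b ^ k ≤ Real.exp (b - 1) ^ k := pow_le_pow_left₀ hb0 hb1 k
  have h2 : Real.exp (b - 1) ^ k = Real.exp ((k:ℝ) * (b - 1)) :=
    (Real.exp_nat_mul _ k).symm
  have h3 : (k:ℝ) * (b - 1) = 1 - x + Real.log (x / 2) := by
    rw [hbdef, hlog, hxdef]; field_simp; ring
  have h4 : Real.exp (1 - x + Real.log (x / 2)) = Real.exp (1 - x) * (x / 2) := by
    rw [Real.exp_add, Real.exp_log (by linarith)]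
  have key : Real.exp (1 - x) * (x / 2) ≤ 1 / x := by
    have h5 : (x + 2) / 3 ≤ Real.exp ((x - 1) / 3) := by
      have := Real.add_one_le_exp ((x - 1) / 3); linarith
    have h6 : ((x + 2) / 3) ^ 3 ≤ Real.exp (x - 1) := by
      calc ((x + 2) / 3) ^ 3 ≤ Real.exp ((x - 1) / 3) ^ 3 :=
            pow_le_pow_left₀ (by linarith) h5 3
        _ = Real.exp ((3:ℕ) * ((x - 1) / 3)) := (Real.exp_nat_mul _ 3).symm
        _ = Real.exp (x - 1) := by push_cast; ring_nf
    have h7 : x ^ 2 / 2 ≤ Real.exp (x - 1) := by nlinarith [h6, mul_nonneg (sq_nonneg (x - 4)) (by linarith : (0:ℝ) ≤ 2 * x + 1)]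
    have hmul : Real.exp (1 - x) * Real.exp (x - 1) = 1 := by
      rw [← Real.exp_add]; norm_num
    have hx0 : (0:ℝ) < x := by linarith
    rw [le_div_iff₀ hx0]
    nlinarith [mul_le_mul_of_nonneg_left h7 (Real.exp_pos (1 - x)).le, hmul,
      (Real.exp_pos (1 - x)).le]
  calc b ^ k ≤ Real.exp (b - 1) ^ k := h1
    _ = Real.exp ((k:ℝ) * (b - 1)) := h2
    _ = Real.exp (1 - x) * (x / 2) := by rw [h3, h4]
    _ ≤ 1 / x := key
end

section
/- For every real ε ∈ (0, 1/e), setting k := ⌈2·ln(1/ε)/ln(ln(1/ε))⌉, it holds that (ln(e·k/2)/k)^k ≤ ε. -/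
open Real

lemma taylor7 (x : ℝ) (hx : 0 ≤ x) :
    1 + x + x^2/2 + x^3/6 + x^4/24 + x^5/120 + x^6/720 + x^7/5040 ≤ Real.exp x := by
  have h := Real.sum_le_exp_of_nonneg hx 8
  simp [Finset.sum_range_succ, Nat.factorial] at h
  linarith

lemma log_lb (b c : ℝ) (n : ℕ) (hb : 0 < b) (h : Real.exp ((n:ℝ) * c) < b ^ n) :
    c < Real.log b := by
  by_contra hc
  push_neg at hc
  have hb' : b ^ n = Real.exp ((n:ℝ) * Real.log b) := by
    rw [Real.exp_nat_mul, Real.exp_log hb]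
  have : Real.exp ((n:ℝ) * Real.log b) ≤ Real.exp ((n:ℝ) * c) :=
    Real.exp_le_exp.2 (mul_le_mul_of_nonneg_left hc (by positivity))
  rw [hb'] at h
  linarith

lemma e2_ub : Real.exp 2 < 7.38905610 := by
  have h := Real.exp_one_lt_d9
  have h2 : Real.exp 2 = Real.exp 1 * Real.exp 1 := by rw [← Real.exp_add]; norm_num
  nlinarith [Real.exp_pos 1]

lemma e3_ub : Real.exp 3 < 20.08553694 := by
  have h := Real.exp_one_lt_d9
  have h3 : Real.exp 3 = Real.exp 1 * Real.exp 1 * Real.exp 1 := by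
    rw [← Real.exp_add, ← Real.exp_add]; norm_num
  nlinarith [Real.exp_pos 1]

lemma ln2_lb : (0.6931471803 : ℝ) < Real.log 2 := Real.log_two_gt_d9

lemma ln32_lb : (2/5 : ℝ) < Real.log (3/2) := by
  apply log_lb _ _ 5 (by norm_num)
  have := e2_ub
  norm_num
  linarith

lemma ln76_lb : (3/20 : ℝ) < Real.log (7/6) := by
  apply log_lb _ _ 20 (by norm_num)
  have := e3_ub
  norm_num
  linarith

lemma ln54_lb : (2/9 : ℝ) < Real.log (5/4) := by
  apply log_lb _ _ 9 (by norm_num)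
  have := e2_ub
  norm_num
  linarith

lemma log_ge_anchor (a x : ℝ) (ha : 0 < a) (hx : 0 < x) :
    Real.log a + 1 - a / x ≤ Real.log x := by
  have h := Real.one_sub_inv_le_log_of_pos (show (0:ℝ) < x / a by positivity)
  rw [Real.log_div (ne_of_gt hx) (ne_of_gt ha)] at h
  have h2 : (x / a)⁻¹ = a / x := by field_simp
  rw [h2] at h
  linarith

lemma piece (x a la : ℝ) (ha : 0 < a) (hx : 0 < x) (hla : la ≤ Real.log a)
    (hpoly : x^2 - la*x + a ≤ 2*(1 + x/2 + (x/2)^2/2 + (x/2)^3/6 + (x/2)^4/24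
      + (x/2)^5/120 + (x/2)^6/720 + (x/2)^7/5040)) :
    x*(1 + x - Real.log x) ≤ 2*Real.exp (x/2) := by
  have hlog := log_ge_anchor a x ha hx
  have hT := taylor7 (x/2) (by positivity)
  have hax : a / x * x = a := div_mul_cancel₀ a (ne_of_gt hx)
  nlinarith [mul_le_mul_of_nonneg_left hlog (le_of_lt hx)]

lemma core (x : ℝ) (hx : 0 < x) : x*(1 + x - Real.log x) ≤ 2*Real.exp (x/2) := by
  rcases le_or_gt x 1 with h1 | h1
  · have hlog := Real.one_sub_inv_le_log_of_pos hx
    have hxi : x * x⁻¹ = 1 := mul_inv_cancel₀ (ne_of_gt hx)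
    have hexp := Real.add_one_le_exp (x/2)
    nlinarith [mul_le_mul_of_nonneg_left hlog (le_of_lt hx)]
  rcases le_or_gt x 2 with h2 | h2
  · refine piece x 1 0 one_pos hx (by simp) ?_
    have hy : (0:ℝ) ≤ x - 1 := by linarith
    nlinarith [mul_nonneg hy (by linarith : (0:ℝ) ≤ 2 - x), pow_nonneg hy 3,
      pow_nonneg hy 4, pow_nonneg hy 5, pow_nonneg hy 6, pow_nonneg hy 7]
  rcases le_or_gt x 2.5 with h3 | h3
  · refine piece x 2 0.6931471803 (by norm_num) hx ln2_lb.le ?_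
    have hy : (0:ℝ) ≤ x - 2 := by linarith
    nlinarith [mul_nonneg hy (by linarith : (0:ℝ) ≤ 2.5 - x), pow_nonneg hy 3,
      pow_nonneg hy 4, pow_nonneg hy 5, pow_nonneg hy 6, pow_nonneg hy 7]
  rcases le_or_gt x 3 with h4 | h4
  · have hla : (0.6931471803 + 2/9 : ℝ) ≤ Real.log 2.5 := by
      have h25 : (2.5:ℝ) = 2 * (5/4) := by norm_num
      rw [h25, Real.log_mul (by norm_num) (by norm_num)]
      have := ln2_lb; have := ln54_lb; linarith
    refine piece x 2.5 (0.6931471803 + 2/9) (by norm_num) hx hla ?_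
    have hy : (0:ℝ) ≤ x - 2.5 := by linarith
    nlinarith [mul_nonneg hy (by linarith : (0:ℝ) ≤ 3 - x), pow_nonneg hy 3,
      pow_nonneg hy 4, pow_nonneg hy 5, pow_nonneg hy 6, pow_nonneg hy 7]
  rcases le_or_gt x 3.5 with h5 | h5
  · have hla : (0.6931471803 + 2/5 : ℝ) ≤ Real.log 3 := by
      have h3' : (3:ℝ) = 2 * (3/2) := by norm_num
      rw [h3', Real.log_mul (by norm_num) (by norm_num)]
      have := ln2_lb; have := ln32_lb; linarith
    refine piece x 3 (0.6931471803 + 2/5) (by norm_num) hx hla ?_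
    have hy : (0:ℝ) ≤ x - 3 := by linarith
    nlinarith [mul_nonneg hy (by linarith : (0:ℝ) ≤ 3.5 - x), pow_nonneg hy 3,
      pow_nonneg hy 4, pow_nonneg hy 5, pow_nonneg hy 6, pow_nonneg hy 7]
  rcases le_or_gt x 4 with h6 | h6
  · have hla : (0.6931471803 + 2/5 + 3/20 : ℝ) ≤ Real.log 3.5 := by
      have h35 : (3.5:ℝ) = 2 * (3/2) * (7/6) := by norm_num
      rw [h35, Real.log_mul (by norm_num) (by norm_num), Real.log_mul (by norm_num) (by norm_num)]
      have := ln2_lb; have := ln32_lb; have := ln76_lb; linarith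
    refine piece x 3.5 (0.6931471803 + 2/5 + 3/20) (by norm_num) hx hla ?_
    have hy : (0:ℝ) ≤ x - 3.5 := by linarith
    nlinarith [mul_nonneg hy (by linarith : (0:ℝ) ≤ 4 - x), pow_nonneg hy 3,
      pow_nonneg hy 4, pow_nonneg hy 5, pow_nonneg hy 6, pow_nonneg hy 7]
  rcases le_or_gt x 5 with h7 | h7
  · have hla : (2*0.6931471803 : ℝ) ≤ Real.log 4 := by
      have h4' : (4:ℝ) = 2 * 2 := by norm_num
      rw [h4', Real.log_mul (by norm_num) (by norm_num)]
      have := ln2_lb; linarith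
    refine piece x 4 (2*0.6931471803) (by norm_num) hx hla ?_
    have hy : (0:ℝ) ≤ x - 4 := by linarith
    nlinarith [mul_nonneg hy (by linarith : (0:ℝ) ≤ 5 - x), pow_nonneg hy 3,
      pow_nonneg hy 4, pow_nonneg hy 5, pow_nonneg hy 6, pow_nonneg hy 7]
  rcases le_or_gt x 6 with h8 | h8
  · have hla : (2*0.6931471803 + 2/9 : ℝ) ≤ Real.log 5 := by
      have h5' : (5:ℝ) = 2 * 2 * (5/4) := by norm_num
      rw [h5', Real.log_mul (by norm_num) (by norm_num), Real.log_mul (by norm_num) (by norm_num)]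
      have := ln2_lb; have := ln54_lb; linarith
    refine piece x 5 (2*0.6931471803 + 2/9) (by norm_num) hx hla ?_
    have hy : (0:ℝ) ≤ x - 5 := by linarith
    nlinarith [mul_nonneg hy (by linarith : (0:ℝ) ≤ 6 - x), pow_nonneg hy 3,
      pow_nonneg hy 4, pow_nonneg hy 5, pow_nonneg hy 6, pow_nonneg hy 7]
  · have hlog1 : 1 ≤ Real.log x := by
      rw [Real.le_log_iff_exp_le hx]
      have := Real.exp_one_lt_d9; linarith
    have step1 : x*(1 + x - Real.log x) ≤ x^2 := by nlinarith
    have hx2 : x^2 = Real.exp (2 * Real.log x) := by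
      rw [two_mul, Real.exp_add, Real.exp_log hx]; ring
    have htan : Real.log x ≤ Real.log 6 + x/6 - 1 := by
      have h := Real.log_le_sub_one_of_pos (show (0:ℝ) < x/6 by linarith)
      rw [Real.log_div (by linarith) (by norm_num)] at h
      linarith
    have hln18 : Real.log 18 ≤ 3 := by
      have h18 : (18:ℝ) ≤ Real.exp 3 := by
        have h := Real.exp_one_gt_d9
        have h3 : Real.exp 3 = Real.exp 1 * Real.exp 1 * Real.exp 1 := by
          rw [← Real.exp_add, ← Real.exp_add]; norm_num
        nlinarith [Real.exp_pos 1]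
      calc Real.log 18 ≤ Real.log (Real.exp 3) := Real.log_le_log (by norm_num) h18
        _ = 3 := Real.log_exp 3
    have hln18' : 2 * Real.log 6 - Real.log 2 = Real.log 18 := by
      have h' : (18:ℝ) = 6 * 6 / 2 := by norm_num
      rw [h', Real.log_div (by norm_num) (by norm_num),
        Real.log_mul (by norm_num) (by norm_num)]; ring
    have key : 2 * Real.log x ≤ x/2 + Real.log 2 := by linarith
    have hfin : x^2 ≤ Real.exp (x/2 + Real.log 2) := by
      rw [hx2]; exact Real.exp_le_exp.2 key
    rw [Real.exp_add, Real.exp_log (by norm_num)] at hfin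
    linarith

set_option maxHeartbeats 1000000 in
/-- Case 3 of the proof of Lemma 4.1: for `ε ∈ (0, 1/e)` and
`k = ⌈2·ln(1/ε)/ln(ln(1/ε))⌉`, the probability `(ln(e·k/2)/k)^k` that the blind
time-based threshold algorithm never selects a value is at most `ε`. -/
theorem stmt9 (ε : ℝ) (hε : 0 < ε) (hε' : ε < 1 / Real.exp 1)
    (k : ℕ) (hk : k = ⌈2 * Real.log (1/ε) / Real.log (Real.log (1/ε))⌉₊) :
    (Real.log (Real.exp 1 * k / 2) / k) ^ k ≤ ε := by
  set L : ℝ := Real.log (1/ε) with hLdef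
  have hinv : Real.exp 1 < 1/ε := by
    rw [lt_div_iff₀ hε]
    have := (lt_div_iff₀ (Real.exp_pos 1)).1 hε'
    linarith
  have hL : 1 < L := by
    rw [hLdef, Real.lt_log_iff_exp_lt (by positivity)]
    exact hinv
  have hLpos : 0 < L := by linarith
  set M : ℝ := Real.log L with hMdef
  have hM : 0 < M := Real.log_pos hL
  set t0 : ℝ := 2 * L / M with ht0def
  have ht0 : 0 < t0 := by positivity
  have hkt0 : t0 ≤ (k : ℝ) := by rw [hk]; exact Nat.le_ceil _
  have hk1 : 1 ≤ k := by
    rw [hk]; exact Nat.one_le_ceil_iff.2 ht0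
  have hkR : (1:ℝ) ≤ (k:ℝ) := by exact_mod_cast hk1
  have hkpos : (0:ℝ) < (k:ℝ) := by linarith
  set S : ℝ := Real.exp (M/2) with hSdef
  have hSpos : 0 < S := Real.exp_pos _
  have hS2 : S * S = L := by
    rw [hSdef, ← Real.exp_add]
    rw [show M/2 + M/2 = M by ring, hMdef, Real.exp_log hLpos]
  have hSM : M < 2 * S := by
    have := Real.add_one_le_exp (M/2)
    rw [← hSdef] at this; linarith
  have hSt0 : S ≤ t0 := by
    rw [ht0def, le_div_iff₀ hM, ← hS2]
    nlinarith
  -- key: log(e * t0 / 2) ≤ t0 / S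
  have hcore := core M hM
  rw [← hSdef] at hcore
  have hlogt0 : Real.log (Real.exp 1 * t0 / 2) = 1 + M - Real.log M := by
    rw [ht0def, show Real.exp 1 * (2 * L / M) / 2 = Real.exp 1 * (L / M) by ring,
      Real.log_mul (Real.exp_ne_zero 1) (by positivity), Real.log_exp,
      Real.log_div (ne_of_gt hLpos) (ne_of_gt hM)]
    rw [← hMdef]; ring
  have hkey : Real.log (Real.exp 1 * t0 / 2) ≤ t0 / S := by
    rw [hlogt0]
    have hts : t0 / S = 2 * S / M := by
      rw [ht0def, ← hS2]; field_simp
    rw [hts, le_div_iff₀ hM]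
    nlinarith
  -- tangent step: log(e*k/2) ≤ log(e*t0/2) + k/t0 - 1
  have htang : Real.log (Real.exp 1 * k / 2) ≤ Real.log (Real.exp 1 * t0 / 2) + (k:ℝ)/t0 - 1 := by
    have h := Real.log_le_sub_one_of_pos (show (0:ℝ) < (Real.exp 1 * k / 2) / (Real.exp 1 * t0 / 2) by positivity)
    rw [Real.log_div (by positivity) (by positivity)] at h
    have hq : (Real.exp 1 * k / 2) / (Real.exp 1 * t0 / 2) = (k:ℝ)/t0 := by
      field_simp
    rw [hq] at h
    linarith
  -- combine: log(e*k/2) ≤ k/S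
  have hcomb : Real.log (Real.exp 1 * k / 2) ≤ (k:ℝ)/S := by
    have h1 : t0/S + (k:ℝ)/t0 - 1 ≤ (k:ℝ)/S := by
      rw [div_add_div _ _ (ne_of_gt hSpos) (ne_of_gt ht0), div_sub_one (by positivity),
        div_le_div_iff₀ (by positivity) hSpos]
      nlinarith [mul_nonneg (mul_nonneg (sub_nonneg.2 hSt0) (sub_nonneg.2 hkt0)) hSpos.le]
    linarith
  -- base bound
  have hbase : Real.log (Real.exp 1 * k / 2) / k ≤ Real.exp (-(L/k)) := by
    have h1S : (1:ℝ)/S = Real.exp (-(M/2)) := by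
      rw [hSdef, Real.exp_neg]; field_simp
    have hMk : -(M/2) ≤ -(L/(k:ℝ)) := by
      rw [neg_le_neg_iff, div_le_div_iff₀ hkpos (by norm_num : (0:ℝ) < 2)]
      rw [ht0def] at hkt0
      rw [div_le_iff₀ hM] at hkt0
      linarith
    calc Real.log (Real.exp 1 * k / 2) / k ≤ 1/S := by
          rw [div_le_div_iff₀ hkpos hSpos]
          have hdm : (k:ℝ)/S*S = (k:ℝ) := div_mul_cancel₀ _ (ne_of_gt hSpos)
          nlinarith [mul_le_mul_of_nonneg_right hcomb hSpos.le]
      _ = Real.exp (-(M/2)) := h1S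
      _ ≤ Real.exp (-(L/(k:ℝ))) := Real.exp_le_exp.2 hMk
  have hbase0 : 0 ≤ Real.log (Real.exp 1 * k / 2) / k := by
    apply div_nonneg _ (le_of_lt hkpos)
    apply Real.log_nonneg
    have he : (2:ℝ) ≤ Real.exp 1 := by linarith [Real.exp_one_gt_d9]
    have h2 : (2:ℝ)*1 ≤ Real.exp 1 * k := mul_le_mul he hkR (by norm_num) (Real.exp_pos 1).le
    linarith
  calc (Real.log (Real.exp 1 * k / 2) / k) ^ k ≤ (Real.exp (-(L/(k:ℝ)))) ^ k :=
        pow_le_pow_left₀ hbase0 hbase k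
    _ = Real.exp (-L) := by
        rw [← Real.exp_nat_mul]
        congr 1
        field_simp
    _ = ε := by
        rw [hLdef, one_div, Real.log_inv, neg_neg, Real.exp_log hε]
end

section
/- There exists ε₀ ∈ (0, 1/e) such that for every ε ∈ (0, ε₀) for which k := ln(1/ε)/(4·ln(ln(1/ε))) is an integer, the following holds on the hard instance with parameter ε: for every measurable threshold function τ : [0,1] → [0,∞), the time-based threshold algorithm satisfies E[ALG_τ] < (1 − ε)·(1 + √ε·(1 − 1/k)). -/
/-!
Write `L = ln(1/ε)` and `S = {s | τ s < 1}`, the arrival times at which a deterministic reward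
would be accepted. If `S` misses a set of measure at least `1/L` in `[0,1]`, then with
probability at least `(1/k)^k (1/L)^k ≥ (1/L)^(2k) = √ε` every random reward is `0` and every deterministic
reward arrives outside `S`, so nothing is accepted and `E[ALG] ≤ (1+√ε)(1-√ε) = 1-ε`.
Otherwise `S` covers most of `[0, 2/L]`, and with probability of order `1/ln L` no random reward
arrives before `2/L` while some deterministic one arrives in `S ∩ [0, 2/L]`; then the algorithm
stops with `1` instead of `1+√ε`, which costs more than `√ε (1/k + 2√ε)` because
`1/k = 4 ln L / L` is much smaller than `1/ln L`.
-/

open MeasureTheory ProbabilityTheory Set Real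
open scoped ENNReal

section Measure
variable {Ω β : Type*} [MeasurableSpace Ω] [MeasurableSpace β] {μ : Measure Ω}

theorem integral_le_of_ae_eq_on [IsProbabilityMeasure μ] {f : Ω → ℝ} {G : Set Ω}
    (hG : MeasurableSet G) {c M : ℝ} (hf : ∀ᵐ ω ∂μ, f ω ∈ Icc 0 M)
    (hfG : ∀ᵐ ω ∂μ, ω ∈ G → f ω = c) :
    ∫ ω, f ω ∂μ ≤ c * μ.real G + M * (1 - μ.real G) := by
  classical
  have hc : IntegrableOn (fun _ => c) G μ := (integrable_const c).integrableOn
  have hM : IntegrableOn (fun _ => M) Gᶜ μ := (integrable_const M).integrableOn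
  calc ∫ ω, f ω ∂μ ≤ ∫ ω, G.piecewise (fun _ => c) (fun _ => M) ω ∂μ := by
        refine integral_mono_of_nonneg (hf.mono fun ω h => h.1) (Integrable.piecewise hG hc hM) ?_
        filter_upwards [hf, hfG] with ω h hG'
        by_cases hω : ω ∈ G
        · simp [hω, hG' hω]
        · simp [hω, h.2]
    _ = c * μ.real G + M * (1 - μ.real G) := by
        rw [integral_piecewise hG hc hM, setIntegral_const, setIntegral_const,
          probReal_compl_eq_one_sub hG, smul_eq_mul, smul_eq_mul, mul_comm, mul_comm (1 - _)]

theorem measureReal_preimage_of_map_eq {X : Ω → β} {ν : Measure β} (hX : Measurable X)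
    (h : μ.map X = ν) {A : Set β} (hA : MeasurableSet A) : μ.real (X ⁻¹' A) = ν.real A := by
  rw [← h, map_measureReal_apply hX hA]

theorem measureReal_preimage_of_map_eq_restrict {X : Ω → β} {ν : Measure β} {s : Set β}
    (hX : Measurable X) (h : μ.map X = ν.restrict s) {A : Set β} (hA : MeasurableSet A) :
    μ.real (X ⁻¹' A) = ν.real (A ∩ s) := by
  rw [measureReal_preimage_of_map_eq hX h hA, measureReal_restrict_apply hA]

theorem ae_of_map_eq {X : Ω → β} {ν : Measure β} (hX : Measurable X) (h : μ.map X = ν)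
    {p : β → Prop} (hp : ∀ᵐ y ∂ν, p y) : ∀ᵐ ω ∂μ, p (X ω) :=
  ae_of_ae_map hX.aemeasurable (h ▸ hp)

theorem ae_eq_of_map_eq_dirac [MeasurableSingletonClass β] {X : Ω → β} (hX : Measurable X)
    {x : β} (h : μ.map X = Measure.dirac x) : ∀ᵐ ω ∂μ, X ω = x :=
  ae_of_map_eq (p := (· = x)) hX h ((ae_dirac_iff (measurableSet_singleton x)).2 rfl)

theorem ae_eq_or_eq_of_map_eq_add [MeasurableSingletonClass β] {X : Ω → β} (hX : Measurable X)
    {x y : β} {c d : ℝ≥0∞} (h : μ.map X = c • Measure.dirac x + d • Measure.dirac y) :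
    ∀ᵐ ω ∂μ, X ω = x ∨ X ω = y := by
  refine ae_of_map_eq (p := fun z => z = x ∨ z = y) hX h ?_
  have hm : MeasurableSet {z | z = x ∨ z = y} :=
    (measurableSet_singleton x).union (measurableSet_singleton y)
  rw [ae_add_measure_iff]
  exact ⟨Measure.ae_smul_measure ((ae_dirac_iff hm).2 (.inl rfl)) c,
    Measure.ae_smul_measure ((ae_dirac_iff hm).2 (.inr rfl)) d⟩

theorem measureReal_preimage_singleton_of_map_eq_add [MeasurableSingletonClass β] {X : Ω → β}
    (hX : Measurable X) {x y : β} {p : ℝ} {d : ℝ≥0∞}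
    (h : μ.map X = ENNReal.ofReal p • Measure.dirac x + d • Measure.dirac y) (hxy : x ≠ y)
    (hp : 0 ≤ p) : μ.real (X ⁻¹' {x}) = p := by
  rw [measureReal_preimage_of_map_eq hX h (measurableSet_singleton x), measureReal_def]
  simp [hxy.symm, hp]

theorem ProbabilityTheory.iIndepFun.measureReal_iInter_preimage {ι : Type*} [Fintype ι]
    {f : ι → Ω → β} (hf : iIndepFun f μ) {B : ι → Set β} (hB : ∀ i, MeasurableSet (B i)) :
    μ.real (⋂ i, f i ⁻¹' B i) = ∏ i, μ.real (f i ⁻¹' B i) := by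
  simp only [measureReal_def]
  rw [hf.meas_iInter fun i => ⟨B i, hB i, rfl⟩, ENNReal.toReal_prod]

theorem ProbabilityTheory.iIndepFun.measureReal_inter_preimage_sumElim {ι κ : Type*}
    [Fintype ι] [Fintype κ] {V t : ι × κ → Ω → β} (h : iIndepFun (Sum.elim V t) μ)
    {bV bt : ι → Set β} (hbV : ∀ i, MeasurableSet (bV i)) (hbt : ∀ i, MeasurableSet (bt i))
    {cV ct : ι → ℝ} (hcV : ∀ p, μ.real (V p ⁻¹' bV p.1) = cV p.1)
    (hct : ∀ p, μ.real (t p ⁻¹' bt p.1) = ct p.1) :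
    μ.real ((⋂ p, V p ⁻¹' bV p.1) ∩ ⋂ p, t p ⁻¹' bt p.1) =
      ∏ i, (cV i * ct i) ^ Fintype.card κ := by
  have key := h.measureReal_iInter_preimage (B := Sum.elim (fun p => bV p.1) (fun p => bt p.1))
    (by rintro (p | p); exacts [hbV p.1, hbt p.1])
  rw [iInter_sum] at key
  simp only [Sum.elim_inl, Sum.elim_inr] at key
  rw [key, Fintype.prod_sum_type]
  simp only [Sum.elim_inl, Sum.elim_inr, hcV, hct, Fintype.prod_prod_type, Finset.prod_const,
    Finset.card_univ, ← Finset.prod_mul_distrib, mul_pow]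

end Measure

theorem volume_real_compl_inter_Iic_le {S : Set ℝ} {u : ℝ} (hu : u ≤ 1) :
    volume.real ((S ∩ Iic u)ᶜ ∩ Icc 0 1) ≤ volume.real (Sᶜ ∩ Icc 0 1) + (1 - u) := by
  calc volume.real ((S ∩ Iic u)ᶜ ∩ Icc 0 1) ≤ volume.real ((Sᶜ ∩ Icc 0 1) ∪ Ioc u 1) := by
        refine measureReal_mono ?_ (measure_union_ne_top
          (measure_ne_top_of_subset inter_subset_right (by simp)) (by simp))
        intro x ⟨hxS, hx⟩
        by_cases hxu : x ≤ u
        · exact .inl ⟨fun h => hxS ⟨h, hxu⟩, hx⟩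
        · exact .inr ⟨not_le.1 hxu, hx.2⟩
    _ ≤ volume.real (Sᶜ ∩ Icc 0 1) + volume.real (Ioc u 1) := measureReal_union_le _ _
    _ = volume.real (Sᶜ ∩ Icc 0 1) + (1 - u) := by rw [Real.volume_real_Ioc_of_le hu]

theorem volume_real_Ioi_inter_Icc {u : ℝ} (hu0 : 0 ≤ u) (hu1 : u ≤ 1) :
    volume.real (Ioi u ∩ Icc 0 1) = 1 - u := by
  have : Ioi u ∩ Icc 0 1 = Ioc u 1 := by
    ext x
    simp only [mem_inter_iff, mem_Ioi, mem_Icc, mem_Ioc]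
    exact ⟨fun h => ⟨h.1, h.2.2⟩, fun h => ⟨h.1, by linarith [h.1], h.2⟩⟩
  rw [this, Real.volume_real_Ioc_of_le hu1]

def IsThresholdOutcome {ι : Type*} (τ : ℝ → ℝ) (v s : ι → ℝ) (x : ℝ) : Prop :=
  ((∀ p, ¬ τ (s p) < v p) → x = 0) ∧
    ∀ p, τ (s p) < v p → (∀ q, τ (s q) < v q → s p ≤ s q) → x = v p

namespace IsThresholdOutcome
variable {ι : Type*} [Finite ι] {τ : ℝ → ℝ} {v s : ι → ℝ} {x : ℝ}

theorem exists_first_accepted (h : IsThresholdOutcome τ v s x) {p₀ : ι}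
    (hp₀ : τ (s p₀) < v p₀) : ∃ p, τ (s p) < v p ∧ s p ≤ s p₀ ∧ x = v p := by
  obtain ⟨p, hp, hmin⟩ := exists_min_image {p | τ (s p) < v p} s (toFinite _) ⟨p₀, hp₀⟩
  exact ⟨p, hp, hmin p₀ hp₀, h.2 p hp hmin⟩

theorem mem_Icc (h : IsThresholdOutcome τ v s x) {a : ℝ} (ha : 0 ≤ a)
    (hv : ∀ p, v p ∈ Icc 0 a) : x ∈ Icc 0 a := by
  by_cases hacc : ∃ p, τ (s p) < v p
  · obtain ⟨p₀, hp₀⟩ := hacc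
    obtain ⟨p, -, -, rfl⟩ := h.exists_first_accepted hp₀
    exact hv p
  · push Not at hacc
    rw [h.1 fun p => (hacc p).not_gt]
    exact ⟨le_rfl, ha⟩

theorem eq_of_accepted_of_le (h : IsThresholdOutcome τ v s x) {p₀ : ι} {u c : ℝ}
    (hp₀ : τ (s p₀) < v p₀) (hp₀u : s p₀ ≤ u) (hc : ∀ q, s q ≤ u → v q = c) : x = c := by
  obtain ⟨p, -, hp, rfl⟩ := h.exists_first_accepted hp₀
  exact hc p (hp.trans hp₀u)

theorem eq_one_of_first_deterministic {k : ℕ} {v s : Fin 2 × Fin k → ℝ}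
    (h : IsThresholdOutcome τ v s x) (hv0 : ∀ j, v (0, j) = 1) {u : ℝ}
    (hlate : ∀ j, u < s (1, j)) {j : Fin k} (hj : τ (s (0, j)) < 1) (hju : s (0, j) ≤ u) :
    x = 1 := by
  refine h.eq_of_accepted_of_le (p₀ := (0, j)) (by rwa [hv0 j]) hju ?_
  rintro ⟨i, j'⟩ hj'
  fin_cases i
  · exact hv0 j'
  · exact absurd hj' (not_le.2 (hlate j'))

end IsThresholdOutcome

section HardInstance
variable {Ω : Type*} [MeasurableSpace Ω] {μ : Measure Ω} {k : ℕ}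
  {V t : Fin 2 × Fin k → Ω → ℝ} {τ : ℝ → ℝ} {ALG : Ω → ℝ}

theorem ae_forall_mem_Icc (hVm : ∀ p, Measurable (V p)) (hV0 : ∀ᵐ ω ∂μ, ∀ j, V (0, j) ω = 1)
    {a : ℝ} {c d : ℝ≥0∞} (hlaw1 : ∀ j, μ.map (V (1, j)) = c • Measure.dirac 0 + d • Measure.dirac a)
    (ha : 1 ≤ a) : ∀ᵐ ω ∂μ, ∀ p, V p ω ∈ Icc 0 a := by
  rw [ae_all_iff]
  rintro ⟨i, j⟩
  fin_cases i
  · filter_upwards [hV0] with ω h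
    simp [h j, ha]
  · filter_upwards [ae_eq_or_eq_of_map_eq_add (hVm _) (hlaw1 j)] with ω h
    rcases h with h | h <;> simp [h] <;> linarith

theorem measureReal_iInter_time_preimage [IsProbabilityMeasure μ] (htm : ∀ p, Measurable (t p))
    (hlawt : ∀ p, μ.map (t p) = volume.restrict (Icc (0 : ℝ) 1))
    (hindep : iIndepFun (Sum.elim V t) μ) {b : Fin 2 → Set ℝ} (hb : ∀ i, MeasurableSet (b i)) :
    μ.real (⋂ p, t p ⁻¹' b p.1) = ∏ i, volume.real (b i ∩ Icc 0 1) ^ k := by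
  simpa using hindep.measureReal_inter_preimage_sumElim (bV := fun _ => univ) (cV := 1)
    (ct := fun i => volume.real (b i ∩ Icc 0 1)) (fun _ => .univ) hb (by simp)
    (fun p => measureReal_preimage_of_map_eq_restrict (htm p) (hlawt p) (hb p.1))

theorem measureReal_iInter_time_preimage_sdiff [IsProbabilityMeasure μ]
    (htm : ∀ p, Measurable (t p)) (hlawt : ∀ p, μ.map (t p) = volume.restrict (Icc (0 : ℝ) 1))
    (hindep : iIndepFun (Sum.elim V t) μ) {X : Set ℝ} (hX : MeasurableSet X) {u : ℝ}
    (hu0 : 0 ≤ u) (hu1 : u ≤ 1) :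
    μ.real ((⋂ p, t p ⁻¹' ![univ, Ioi u] p.1) \ ⋂ p, t p ⁻¹' ![Xᶜ, Ioi u] p.1) =
      (1 - u) ^ k * (1 - volume.real (Xᶜ ∩ Icc 0 1) ^ k) := by
  have hbA : ∀ i, MeasurableSet (![univ, Ioi u] i) := by intro i; fin_cases i <;> simp
  have hbB : ∀ i, MeasurableSet (![Xᶜ, Ioi u] i) := by intro i; fin_cases i <;> simp [hX.compl]
  have hBA : ⋂ p, t p ⁻¹' ![Xᶜ, Ioi u] p.1 ⊆ ⋂ p, t p ⁻¹' ![univ, Ioi u] p.1 := by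
    refine iInter_mono fun p => preimage_mono ?_
    obtain ⟨i, j⟩ := p
    fin_cases i <;> simp
  rw [measureReal_sdiff hBA (.iInter fun p => htm p (hbB p.1)),
    measureReal_iInter_time_preimage htm hlawt hindep hbA,
    measureReal_iInter_time_preimage htm hlawt hindep hbB]
  simp [Fin.prod_univ_two, volume_real_Ioi_inter_Icc hu0 hu1]
  ring

theorem integral_le_of_all_rejected [IsProbabilityMeasure μ] (hVm : ∀ p, Measurable (V p))
    (htm : ∀ p, Measurable (t p))
    (hlawt : ∀ p, μ.map (t p) = volume.restrict (Icc (0 : ℝ) 1))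
    (hindep : iIndepFun (Sum.elim V t) μ) (hV0 : ∀ᵐ ω ∂μ, ∀ j, V (0, j) ω = 1) {q : ℝ}
    (hq : ∀ j, μ.real (V (1, j) ⁻¹' {0}) = q) (hτ : Measurable τ) (hτ0 : ∀ s, 0 ≤ τ s)
    (hALG : ∀ᵐ ω ∂μ, IsThresholdOutcome τ (V · ω) (t · ω) (ALG ω)) {a : ℝ}
    (hbound : ∀ᵐ ω ∂μ, ALG ω ∈ Icc 0 a) :
    ∫ ω, ALG ω ∂μ ≤ a * (1 - (q * volume.real ((τ ⁻¹' Iio 1)ᶜ ∩ Icc 0 1)) ^ k) := by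
  set S := τ ⁻¹' Iio 1
  have hS : MeasurableSet S := hτ measurableSet_Iio
  have hbV : ∀ i, MeasurableSet (![univ, {0}] i : Set ℝ) := by intro i; fin_cases i <;> simp
  have hbt : ∀ i, MeasurableSet (![Sᶜ, univ] i : Set ℝ) := by
    intro i; fin_cases i <;> simp [hS.compl]
  set G := (⋂ p, V p ⁻¹' ![univ, {0}] p.1) ∩ ⋂ p, t p ⁻¹' ![Sᶜ, univ] p.1
  have hG : MeasurableSet G :=
    (MeasurableSet.iInter fun p => hVm p (hbV p.1)).inter (.iInter fun p => htm p (hbt p.1))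
  have hμG : μ.real G = (q * volume.real (Sᶜ ∩ Icc 0 1)) ^ k := by
    rw [hindep.measureReal_inter_preimage_sumElim (cV := ![1, q])
      (ct := ![volume.real (Sᶜ ∩ Icc 0 1), 1]) hbV hbt]
    · simp [Fin.prod_univ_two, mul_pow, mul_comm]
    · rintro ⟨i, j⟩
      fin_cases i
      · simp
      · simpa using hq j
    · rintro ⟨i, j⟩
      fin_cases i
      · simpa using measureReal_preimage_of_map_eq_restrict (htm _) (hlawt _) hS.compl
      · simp
  have hALG_G : ∀ᵐ ω ∂μ, ω ∈ G → ALG ω = 0 := by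
    filter_upwards [hALG, hV0] with ω hω hω0 hωG
    simp only [G, mem_inter_iff, mem_iInter, mem_preimage] at hωG
    refine hω.1 fun ⟨i, j⟩ => not_lt.2 ?_
    fin_cases i
    · simpa [hω0 j, S] using hωG.2 (0, j)
    · simpa [show V (1, j) ω = 0 by simpa using hωG.1 (1, j)] using hτ0 _
  calc ∫ ω, ALG ω ∂μ ≤ 0 * μ.real G + a * (1 - μ.real G) :=
        integral_le_of_ae_eq_on hG hbound hALG_G
    _ = _ := by rw [hμG]; ring

theorem integral_le_of_first_accepted_deterministic [IsProbabilityMeasure μ]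
    (htm : ∀ p, Measurable (t p))
    (hlawt : ∀ p, μ.map (t p) = volume.restrict (Icc (0 : ℝ) 1))
    (hindep : iIndepFun (Sum.elim V t) μ) (hV0 : ∀ᵐ ω ∂μ, ∀ j, V (0, j) ω = 1)
    (hτ : Measurable τ) (hALG : ∀ᵐ ω ∂μ, IsThresholdOutcome τ (V · ω) (t · ω) (ALG ω)) {a : ℝ}
    (ha : 1 ≤ a) (hbound : ∀ᵐ ω ∂μ, ALG ω ∈ Icc 0 a) {u : ℝ} (hu0 : 0 ≤ u) (hu1 : u ≤ 1) :
    ∫ ω, ALG ω ∂μ ≤ 1 + (a - 1) *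
      (1 - (1 - u) ^ k * (1 - (1 - u + volume.real ((τ ⁻¹' Iio 1)ᶜ ∩ Icc 0 1)) ^ k)) := by
  set S := τ ⁻¹' Iio 1
  set X := S ∩ Iic u
  have hX : MeasurableSet X := (hτ measurableSet_Iio).inter measurableSet_Iic
  -- On `A \ B` no random reward arrives before `u`, but a deterministic one arrives in `X`.
  set A := ⋂ p, t p ⁻¹' ![univ, Ioi u] p.1
  set B := ⋂ p, t p ⁻¹' ![Xᶜ, Ioi u] p.1
  have hbA : ∀ i, MeasurableSet (![univ, Ioi u] i) := by intro i; fin_cases i <;> simp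
  have hbB : ∀ i, MeasurableSet (![Xᶜ, Ioi u] i) := by intro i; fin_cases i <;> simp [hX.compl]
  have hALG_G : ∀ᵐ ω ∂μ, ω ∈ A \ B → ALG ω = 1 := by
    filter_upwards [hALG, hV0] with ω hω hω0 hωG
    simp only [A, B, mem_sdiff, mem_iInter, mem_preimage] at hωG
    have hlate (j : Fin k) : u < t (1, j) ω := by simpa using hωG.1 (1, j)
    obtain ⟨⟨i, j⟩, hj⟩ := not_forall.1 hωG.2
    fin_cases i
    · have hjX : t (0, j) ω ∈ X := by simpa using hj
      exact hω.eq_one_of_first_deterministic hω0 hlate hjX.1 hjX.2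
    · exact absurd (hlate j) (by simpa using hj)
  have hμG := measureReal_iInter_time_preimage_sdiff htm hlawt hindep hX hu0 hu1
  have hXc := volume_real_compl_inter_Iic_le (S := S) hu1
  calc ∫ ω, ALG ω ∂μ ≤ 1 * μ.real (A \ B) + a * (1 - μ.real (A \ B)) :=
        integral_le_of_ae_eq_on ((MeasurableSet.iInter fun p => htm p (hbA p.1)).diff
          (.iInter fun p => htm p (hbB p.1))) hbound hALG_G
    _ = 1 + (a - 1) * (1 - μ.real (A \ B)) := by ring
    _ ≤ _ := by
        have : 0 ≤ a - 1 := by linarith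
        rw [hμG]
        gcongr
        linarith

end HardInstance

section Estimates
variable {L : ℝ} {k : ℕ}

theorem le_log_one_div_of_lt_exp {ε : ℝ} (hε : 0 < ε) (h : ε < exp (-10 ^ 8)) :
    10 ^ 8 ≤ log (1 / ε) := by
  rw [one_div, log_inv, le_neg]
  exact ((log_lt_iff_lt_exp hε).2 h).le

theorem sqrt_eq_exp_neg_half_log {ε : ℝ} (hε : 0 < ε) : √ε = exp (-(log (1 / ε) / 2)) := by
  rw [one_div, log_inv, neg_div, neg_neg, exp_half, exp_log hε]

theorem log_sq_le_sqrt {x : ℝ} (hx : 1 ≤ x) : log x ^ 2 ≤ 16 * √x := by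
  have h := log_le_rpow_div (by linarith) (show (0 : ℝ) < 1 / 4 by norm_num) (x := x)
  calc log x ^ 2 ≤ (x ^ (1 / 4 : ℝ) / (1 / 4)) ^ 2 := pow_le_pow_left₀ (log_nonneg hx) h 2
    _ = 16 * √x := by
      rw [div_pow, ← rpow_natCast, ← rpow_mul (by linarith), sqrt_eq_rpow]
      norm_num
      ring

theorem log_sq_div_le (hL : 10 ^ 8 ≤ L) : log L ^ 2 / L ≤ 1 / 625 := by
  have hLpos : 0 < L := by linarith
  have hsqrt : 10 ^ 4 ≤ √L := by
    rw [show (10 : ℝ) ^ 4 = √((10 ^ 4) ^ 2) by rw [sqrt_sq (by norm_num)]]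
    exact sqrt_le_sqrt (by linarith)
  rw [div_le_iff₀ hLpos]
  calc log L ^ 2 ≤ 16 * √L := log_sq_le_sqrt (by linarith)
    _ ≤ 1 / 625 * L := by nlinarith [sq_sqrt hLpos.le]

theorem one_le_log_of_le (hL : 10 ^ 8 ≤ L) : 1 ≤ log L := by
  rw [le_log_iff_exp_le (by linarith)]
  linarith [exp_one_lt_d9]

theorem two_le_of_eq_div_log (hL : 10 ^ 8 ≤ L) (hk : (k : ℝ) = L / (4 * log L)) :
    2 ≤ (k : ℝ) := by
  have h1 := one_le_log_of_le hL
  have h2 := log_sq_div_le hL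
  rw [div_le_iff₀ (by linarith)] at h2
  rw [hk, le_div_iff₀ (by linarith)]
  nlinarith

theorem one_div_pow_eq_exp (hL : 10 ^ 8 ≤ L) (hk : (k : ℝ) = L / (4 * log L)) :
    (1 / L) ^ k = exp (-(L / 4)) := by
  have hlg := one_le_log_of_le hL
  have hinv : 1 / L = exp (-log L) := by rw [exp_neg, exp_log (by linarith), one_div]
  rw [hinv, ← exp_nat_mul, hk]
  field_simp

theorem exp_neg_half_le_pow {m : ℝ} (hL : 10 ^ 8 ≤ L) (hk : (k : ℝ) = L / (4 * log L))
    (hm : 1 / L ≤ m) : exp (-(L / 2)) ≤ (1 / (k : ℝ) * m) ^ k := by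
  have hkL : 1 / L ≤ 1 / (k : ℝ) := by
    have := one_le_log_of_le hL
    have := two_le_of_eq_div_log hL hk
    gcongr
    rw [hk, div_le_iff₀ (by linarith)]
    nlinarith
  have : 0 ≤ 1 / L := by positivity
  calc exp (-(L / 2)) = (1 / L) ^ k * (1 / L) ^ k := by
        rw [one_div_pow_eq_exp hL hk, ← exp_add]; ring_nf
    _ ≤ (1 / (k : ℝ)) ^ k * m ^ k := by gcongr
    _ = (1 / (k : ℝ) * m) ^ k := (mul_pow _ _ _).symm

theorem natCast_div_eq (hL : 10 ^ 8 ≤ L) (hk : (k : ℝ) = L / (4 * log L)) :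
    (k : ℝ) / L = 1 / (4 * log L) := by
  have := one_le_log_of_le hL
  rw [hk]
  field_simp

theorem half_le_one_sub_two_div_pow (hL : 10 ^ 8 ≤ L) (hk : (k : ℝ) = L / (4 * log L)) :
    1 / 2 ≤ (1 - 2 / L) ^ k := by
  have hlg := one_le_log_of_le hL
  have h2L : 2 / L ≤ 2 := by rw [div_le_iff₀ (by linarith)]; linarith
  have hB := one_add_mul_le_pow (show (-2 : ℝ) ≤ -(2 / L) by linarith) k
  have : (k : ℝ) * (2 / L) = 1 / (2 * log L) := by
    rw [mul_div_assoc', mul_comm, mul_div_assoc, natCast_div_eq hL hk]; ring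
  have : 1 / (2 * log L) ≤ 1 / 2 := by gcongr; linarith
  rw [← sub_eq_add_neg] at hB
  linarith

theorem one_sub_two_div_add_pow_le {m : ℝ} (hL : 10 ^ 8 ≤ L) (hk : (k : ℝ) = L / (4 * log L))
    (hm0 : 0 ≤ m) (hm : m < 1 / L) :
    (1 - 2 / L + m) ^ k ≤ 4 * log L / (4 * log L + 1) := by
  have hlg := one_le_log_of_le hL
  have h2L : 2 / L = 2 * (1 / L) := by ring
  have h1L : 1 / L ≤ 1 / 2 := by gcongr; linarith
  calc (1 - 2 / L + m) ^ k ≤ exp (-(1 / L)) ^ k := by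
        gcongr
        · linarith
        · linarith [add_one_le_exp (-(1 / L))]
    _ = exp (-(1 / (4 * log L))) := by rw [← exp_nat_mul, ← natCast_div_eq hL hk]; ring_nf
    _ ≤ 4 * log L / (4 * log L + 1) := by
        rw [exp_neg, ← one_div, div_le_div_iff₀ (exp_pos _) (by linarith)]
        nlinarith [add_one_le_exp (1 / (4 * log L)),
          mul_div_cancel₀ (1 : ℝ) (show 4 * log L ≠ 0 by linarith)]

theorem lt_pow_mul_one_sub_pow {m : ℝ} (hL : 10 ^ 8 ≤ L) (hk : (k : ℝ) = L / (4 * log L))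
    (hm0 : 0 ≤ m) (hm : m < 1 / L) :
    1 / (k : ℝ) + 2 * exp (-(L / 2)) < (1 - 2 / L) ^ k * (1 - (1 - 2 / L + m) ^ k) := by
  set lg := log L
  have hLpos : 0 < L := by linarith
  have hlg : 1 ≤ lg := one_le_log_of_le hL
  have hlg2 : lg ^ 2 ≤ L / 625 := by
    have := log_sq_div_le hL
    rw [div_le_iff₀ hLpos] at this
    linarith
  have hexp : exp (-(L / 2)) ≤ 2 / L := by
    rw [exp_neg, ← one_div, div_le_div_iff₀ (exp_pos _) hLpos]
    linarith [add_one_le_exp (L / 2)]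
  have hfrac : 4 * lg / (4 * lg + 1) = 1 - 1 / (4 * lg + 1) := by field_simp; ring
  calc 1 / (k : ℝ) + 2 * exp (-(L / 2)) ≤ (4 * lg + 4) / L := by
        rw [hk, one_div_div, add_div]
        linarith [show 4 / L = 2 * (2 / L) by ring]
    _ < 1 / 2 * (1 / (4 * lg + 1)) := by
        rw [div_lt_iff₀ hLpos, show 1 / 2 * (1 / (4 * lg + 1)) * L = L / (2 * (4 * lg + 1)) by
          field_simp, lt_div_iff₀ (by linarith)]
        nlinarith
    _ ≤ (1 - 2 / L) ^ k * (1 - (1 - 2 / L + m) ^ k) := by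
        have hsurvive := half_le_one_sub_two_div_pow hL hk
        refine mul_le_mul hsurvive ?_ (by positivity) (by linarith)
        linarith [one_sub_two_div_add_pow_le hL hk hm0 hm]

theorem one_add_mul_one_sub_lt_of_le {s ε κ P : ℝ} (hs : s ^ 2 = ε) (hs0 : 0 < s) (hs1 : s < 1)
    (hκ : 1 < κ) (hP : s ≤ P) : (1 + s) * (1 - P) < (1 - ε) * (1 + s * (1 - 1 / κ)) := by
  have hκ' : 0 < 1 - 1 / κ := by rw [sub_pos, div_lt_one (by linarith)]; exact hκ
  subst hs
  nlinarith [mul_pos (mul_pos hs0 hκ') (show 0 < 1 - s ^ 2 by nlinarith)]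

theorem one_add_mul_one_sub_lt_of_lt {s ε κ P : ℝ} (hs : s ^ 2 = ε) (hs0 : 0 < s) (hs1 : s ≤ 1)
    (hκ : 0 < κ) (hP : 1 / κ + 2 * s < P) :
    1 + s * (1 - P) < (1 - ε) * (1 + s * (1 - 1 / κ)) := by
  have hκ' : 0 < 1 / κ := by positivity
  subst hs
  nlinarith [mul_pos hs0 (show 0 < P - 1 / κ - 2 * s by linarith),
    mul_nonneg (sq_nonneg s) (show 0 ≤ 1 - s by linarith), mul_pos (pow_pos hs0 3) hκ']

end Estimates

/-- **Lemma 4.2.** Hardness for time-based threshold algorithms: there is `ε₀ ∈ (0, 1/e)`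
such that for every `ε ∈ (0, ε₀)` for which `k = ln(1/ε)/(4 ln ln(1/ε))` is an integer,
on the instance with `k` copies of a deterministic reward `1` and `k` copies of a random
reward that is `1+√ε` w.p. `1−1/k` and `0` w.p. `1/k` (all arrival times i.i.d. uniform
on `[0,1]`), every time-based threshold algorithm has expected value strictly less than
`(1−ε)·E[OPT] = (1−ε)·(1+√ε·(1−1/k))`. -/
theorem stmt10 :
    ∃ ε₀ ∈ Set.Ioo (0:ℝ) (1 / Real.exp 1),
      ∀ ε : ℝ, 0 < ε → ε < ε₀ →
      ∀ k : ℕ, (k : ℝ) = Real.log (1 / ε) / (4 * Real.log (Real.log (1 / ε))) →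
      ∀ (Ω : Type*) (mΩ : MeasurableSpace Ω) (μ : Measure Ω), IsProbabilityMeasure μ →
      ∀ V t : Fin 2 × Fin k → Ω → ℝ,
      (∀ p, Measurable (V p)) → (∀ p, Measurable (t p)) →
      -- rewards of the first type are deterministically 1
      (∀ j : Fin k, Measure.map (V (0, j)) μ = Measure.dirac 1) →
      -- rewards of the second type are 1+√ε w.p. 1−p and 0 w.p. p, with p = 1/k
      (∀ j : Fin k, Measure.map (V (1, j)) μ =
        ENNReal.ofReal (1 / (k:ℝ)) • Measure.dirac 0
          + ENNReal.ofReal (1 - 1 / (k:ℝ)) • Measure.dirac (1 + Real.sqrt ε)) →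
      -- arrival times are uniform on [0,1]
      (∀ p, Measure.map (t p) μ = volume.restrict (Set.Icc (0:ℝ) 1)) →
      -- all rewards and arrival times are mutually independent
      iIndepFun (Sum.elim V t) μ →
      -- any measurable threshold function τ : [0,1] → [0,∞)
      ∀ τ : ℝ → ℝ, Measurable τ → (∀ s, 0 ≤ τ s) →
      -- ALG is the value of the time-based threshold algorithm defined by τ
      ∀ ALG : Ω → ℝ, Measurable ALG →
      (∀ᵐ ω ∂μ, (∀ p : Fin 2 × Fin k, ¬ τ (t p ω) < V p ω) → ALG ω = 0) →
      (∀ᵐ ω ∂μ, ∀ p : Fin 2 × Fin k, τ (t p ω) < V p ω →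
        (∀ q : Fin 2 × Fin k, τ (t q ω) < V q ω → t p ω ≤ t q ω) → ALG ω = V p ω) →
      ∫ ω, ALG ω ∂μ < (1 - ε) * (1 + Real.sqrt ε * (1 - 1 / (k:ℝ))) := by
  refine ⟨exp (-10 ^ 8), ⟨exp_pos _, ?_⟩, fun ε hε hεlt k hk Ω _ μ _ V t hVm htm hlaw0 hlaw1
    hlawt hindep τ hτ hτ0 ALG _ hALG0 hALGmin => ?_⟩
  · rw [one_div, ← exp_neg]
    exact exp_lt_exp.2 (by norm_num)
  set L := log (1 / ε)
  have hL : 10 ^ 8 ≤ L := le_log_one_div_of_lt_exp hε hεlt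
  have hsqrt : √ε = exp (-(L / 2)) := sqrt_eq_exp_neg_half_log hε
  have hs1 : √ε < 1 := by rw [hsqrt, exp_lt_one_iff]; linarith
  have hk2 := two_le_of_eq_div_log hL hk
  have hV0 : ∀ᵐ ω ∂μ, ∀ j, V (0, j) ω = 1 :=
    ae_all_iff.2 fun j => ae_eq_of_map_eq_dirac (hVm _) (hlaw0 j)
  have hALG : ∀ᵐ ω ∂μ, IsThresholdOutcome τ (V · ω) (t · ω) (ALG ω) := hALG0.and hALGmin
  have hbound : ∀ᵐ ω ∂μ, ALG ω ∈ Icc 0 (1 + √ε) := by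
    filter_upwards [hALG, ae_forall_mem_Icc hVm hV0 hlaw1 (by simp)] with ω h hv
    exact h.mem_Icc (by positivity) hv
  set m := volume.real ((τ ⁻¹' Iio 1)ᶜ ∩ Icc 0 1)
  rcases le_or_gt (1 / L) m with hm | hm
  · have hq (j : Fin k) : μ.real (V (1, j) ⁻¹' {0}) = 1 / k :=
      measureReal_preimage_singleton_of_map_eq_add (hVm _) (hlaw1 j) (by positivity)
        (by positivity)
    calc ∫ ω, ALG ω ∂μ ≤ (1 + √ε) * (1 - (1 / k * m) ^ k) :=
          integral_le_of_all_rejected hVm htm hlawt hindep hV0 hq hτ hτ0 hALG hbound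
      _ < _ := one_add_mul_one_sub_lt_of_le (sq_sqrt hε.le) (sqrt_pos.2 hε) hs1 (by linarith)
          (hsqrt ▸ exp_neg_half_le_pow hL hk hm)
  · calc ∫ ω, ALG ω ∂μ ≤ 1 + √ε * (1 - (1 - 2 / L) ^ k * (1 - (1 - 2 / L + m) ^ k)) := by
          simpa using integral_le_of_first_accepted_deterministic htm hlawt hindep hV0 hτ hALG
            (by simp) hbound (u := 2 / L) (by positivity)
            (by rw [div_le_one (by positivity)]; linarith)
      _ < _ := one_add_mul_one_sub_lt_of_lt (sq_sqrt hε.le) (sqrt_pos.2 hε) hs1.le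
          (by linarith) (hsqrt ▸ lt_pow_mul_one_sub_pow hL hk measureReal_nonneg hm)
end

section
/- Let ℓ ≥ 1 and n ≥ 1 be integers, set k := 8ℓ, and let w₁,…,wₙ be nonnegative reals with ∑_{i=1}^n wᵢ = ℓ. Let (t_{i,j})_{i ∈ {1,…,n}, j ∈ {1,…,k}} be i.i.d. random variables uniform on [0,1]. Then P(∑_{i=1}^n ∑_{j=1}^k wᵢ·𝟙{t_{i,j} < 2/k} > 7ℓ² − ℓ) ≤ e^{−4ℓ}. -/
/-!
Each summand `wᵢ · 𝟙{t_{i,j} < 2/k}` lies in `[0, wᵢ]` and has mean `2wᵢ/k`, so the sum has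
mean `2ℓ`, and Hoeffding's inequality bounds its upper tail at `2ℓ + ε` by
`exp(-2ε² / ∑_{i,j} wᵢ²)`. Since `∑_{i,j} wᵢ² = k ∑ᵢ wᵢ² ≤ k (∑ᵢ wᵢ)² = 8ℓ³`, the choice
`ε = 7ℓ² − 3ℓ` gives the exponent `-(7ℓ − 3)² / (4ℓ) ≤ -4ℓ`.
-/

open MeasureTheory ProbabilityTheory

lemma measureReal_sum_sub_integral_ge_le_of_mem_Icc {Ω ι : Type*} {mΩ : MeasurableSpace Ω}
    {μ : Measure Ω} [IsProbabilityMeasure μ] {X : ι → Ω → ℝ} (h_indep : iIndepFun X μ)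
    {s : Finset ι} (hX : ∀ i ∈ s, AEMeasurable (X i) μ) {a b : ι → ℝ}
    (hab : ∀ i ∈ s, ∀ᵐ ω ∂μ, X i ω ∈ Set.Icc (a i) (b i)) {ε : ℝ} (hε : 0 ≤ ε) :
    μ.real {ω | ε ≤ ∑ i ∈ s, (X i ω - μ[X i])}
      ≤ Real.exp (-2 * ε ^ 2 / ∑ i ∈ s, (b i - a i) ^ 2) := by
  have h_indep' : iIndepFun (fun i ω ↦ X i ω - μ[X i]) μ :=
    h_indep.comp (fun (i : ι) (x : ℝ) ↦ x - ∫ ω, X i ω ∂μ) fun i ↦ measurable_id.sub_const _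
  refine (HasSubgaussianMGF.measure_sum_ge_le_of_iIndepFun h_indep'
    (fun i hi ↦ hasSubgaussianMGF_of_mem_Icc (hX i hi) (hab i hi)) hε).trans_eq ?_
  congr 1
  push_cast
  simp only [Real.norm_eq_abs, div_pow, sq_abs, ← Finset.sum_div]
  ring

lemma measureReal_restrict_Icc_zero_one_Iio {θ : ℝ} (h₀ : 0 ≤ θ) (h₁ : θ ≤ 1) :
    (volume.restrict (Set.Icc (0 : ℝ) 1)).real (Set.Iio θ) = θ := by
  have h_inter : Set.Iio θ ∩ Set.Icc 0 1 = Set.Ico 0 θ := by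
    ext x
    simp only [Set.mem_inter_iff, Set.mem_Iio, Set.mem_Icc, Set.mem_Ico]
    grind
  rw [measureReal_restrict_apply measurableSet_Iio, h_inter, Real.volume_real_Ico_of_le h₀,
    sub_zero]

lemma integral_mul_ite_lt_of_map_eq_uniform {Ω : Type*} {mΩ : MeasurableSpace Ω}
    {μ : Measure Ω} {t : Ω → ℝ} (ht : Measurable t)
    (h_law : μ.map t = volume.restrict (Set.Icc (0 : ℝ) 1)) (c : ℝ) {θ : ℝ} (h₀ : 0 ≤ θ)
    (h₁ : θ ≤ 1) :
    ∫ ω, c * (if t ω < θ then 1 else 0) ∂μ = c * θ := by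
  have h_ind : (fun ω ↦ if t ω < θ then (1 : ℝ) else 0) = (t ⁻¹' Set.Iio θ).indicator 1 := by
    ext ω
    simp [Set.indicator]
  rw [integral_const_mul, h_ind, integral_indicator_one (ht measurableSet_Iio),
    ← map_measureReal_apply ht measurableSet_Iio, h_law,
    measureReal_restrict_Icc_zero_one_Iio h₀ h₁]

lemma neg_two_mul_sq_div_le_neg_four_mul {ℓ D : ℝ} (hℓ : 1 ≤ ℓ) (hD₀ : 0 < D)
    (hD : D ≤ 8 * ℓ ^ 3) :
    -2 * (7 * ℓ ^ 2 - 3 * ℓ) ^ 2 / D ≤ -(4 * ℓ) := by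
  rw [div_le_iff₀ hD₀]
  have h_poly : 0 ≤ ℓ ^ 2 * ((ℓ - 1) * (11 * ℓ - 3)) := by
    have : 0 ≤ ℓ - 1 := by linarith
    have : 0 ≤ 11 * ℓ - 3 := by linarith
    positivity
  nlinarith [mul_le_mul_of_nonneg_left hD (by positivity : (0 : ℝ) ≤ 4 * ℓ)]

lemma measureReal_sum_mul_ite_lt_ge_le {Ω ι : Type*} [Fintype ι] {mΩ : MeasurableSpace Ω}
    {μ : Measure Ω} [IsProbabilityMeasure μ] {t : ι → Ω → ℝ} (ht : ∀ i, Measurable (t i))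
    (h_law : ∀ i, μ.map (t i) = volume.restrict (Set.Icc (0 : ℝ) 1)) (h_indep : iIndepFun t μ)
    {v : ι → ℝ} (hv : ∀ i, 0 ≤ v i) {θ ε : ℝ} (hθ₀ : 0 ≤ θ) (hθ₁ : θ ≤ 1) (hε : 0 ≤ ε) :
    μ.real {ω | θ * ∑ i, v i + ε ≤ ∑ i, v i * (if t i ω < θ then 1 else 0)}
      ≤ Real.exp (-2 * ε ^ 2 / ∑ i, v i ^ 2) := by
  set Y : ι → Ω → ℝ := fun i ω ↦ v i * if t i ω < θ then 1 else 0
  have hφ : ∀ i, Measurable fun x : ℝ ↦ v i * if x < θ then 1 else 0 :=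
    fun i ↦ (Measurable.ite measurableSet_Iio measurable_const measurable_const).const_mul _
  have hY_mem : ∀ i ∈ Finset.univ, ∀ᵐ ω ∂μ, Y i ω ∈ Set.Icc (0 : ℝ) (v i) := by
    refine fun i _ ↦ ae_of_all _ fun ω ↦ ?_
    by_cases h : t i ω < θ <;> simp [Y, h, hv]
  have hY_mean : ∑ i, μ[Y i] = θ * ∑ i, v i := by
    simp only [Y, integral_mul_ite_lt_of_map_eq_uniform (ht _) (h_law _) _ hθ₀ hθ₁,
      ← Finset.sum_mul, mul_comm θ]
  calc _ ≤ μ.real {ω | ε ≤ ∑ i, (Y i ω - μ[Y i])} := by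
        refine measureReal_mono fun ω hω ↦ ?_
        simp only [Set.mem_ofPred_eq, Finset.sum_sub_distrib, hY_mean] at hω ⊢
        linarith
    _ ≤ Real.exp (-2 * ε ^ 2 / ∑ i, (v i - 0) ^ 2) :=
        measureReal_sum_sub_integral_ge_le_of_mem_Icc (h_indep.comp _ hφ)
          (fun i _ ↦ ((hφ i).comp (ht i)).aemeasurable) hY_mem hε
    _ = Real.exp (-2 * ε ^ 2 / ∑ i, v i ^ 2) := by simp_rw [sub_zero]

theorem stmt14_general (ℓ n k : ℕ) (hℓ : 1 ≤ ℓ) (hk : k = 8 * ℓ)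
    (w : Fin n → ℝ) (hw : ∀ i, 0 ≤ w i) (hsum : ∑ i, w i = (ℓ:ℝ))
    (Ω : Type*) [MeasurableSpace Ω] (μ : Measure Ω) [IsProbabilityMeasure μ]
    (t : Fin n × Fin k → Ω → ℝ) (hmt : ∀ p, Measurable (t p))
    (hdist : ∀ p, Measure.map (t p) μ = volume.restrict (Set.Icc (0:ℝ) 1))
    (hindep : iIndepFun t μ) :
    μ {ω | 7 * (ℓ:ℝ) ^ 2 - ℓ < ∑ i, ∑ j, w i * (if t (i, j) ω < 2 / (k:ℝ) then 1 else 0)}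
      ≤ ENNReal.ofReal (Real.exp (-(4 * (ℓ:ℝ)))) := by
  have hℓR : (1 : ℝ) ≤ ℓ := by exact_mod_cast hℓ
  have hkR : (k : ℝ) = 8 * ℓ := by rw [hk]; push_cast; ring
  have hk_pos : (0 : ℝ) < k := by rw [hkR]; positivity
  have h_mean : 2 / (k : ℝ) * ∑ p : Fin n × Fin k, w p.1 = 2 * ℓ := by
    simp only [Fintype.sum_prod_type, Finset.sum_const, Finset.card_univ, Fintype.card_fin,
      nsmul_eq_mul, ← Finset.mul_sum, hsum]
    field_simp
  have h_sum_sq : ∑ p : Fin n × Fin k, w p.1 ^ 2 = k * ∑ i, w i ^ 2 := by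
    simp [Fintype.sum_prod_type, Finset.mul_sum]
  have h_sum_sq_pos : 0 < ∑ i, w i ^ 2 := by
    obtain ⟨i, -, hi⟩ := Finset.exists_lt_of_sum_lt (s := Finset.univ) (f := fun _ ↦ (0 : ℝ))
      (g := w) (by rw [hsum, Finset.sum_const_zero]; linarith)
    exact Finset.sum_pos' (fun i _ ↦ sq_nonneg _) ⟨i, Finset.mem_univ _, pow_pos hi 2⟩
  have h_sum_sq_le : ∑ i, w i ^ 2 ≤ ℓ ^ 2 :=
    hsum ▸ Finset.sum_sq_le_sq_sum_of_nonneg fun i _ ↦ hw i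
  rw [← ofReal_measureReal]
  refine ENNReal.ofReal_le_ofReal ?_
  calc _ ≤ μ.real {ω | 2 / (k : ℝ) * ∑ p : Fin n × Fin k, w p.1 + (7 * ℓ ^ 2 - 3 * ℓ)
          ≤ ∑ p : Fin n × Fin k, w p.1 * (if t p ω < 2 / (k : ℝ) then 1 else 0)} := by
        refine measureReal_mono fun ω hω ↦ ?_
        simp only [Set.mem_ofPred_eq] at hω ⊢
        rw [h_mean, Fintype.sum_prod_type]
        linarith
    _ ≤ Real.exp (-2 * (7 * (ℓ : ℝ) ^ 2 - 3 * ℓ) ^ 2 / ∑ p : Fin n × Fin k, w p.1 ^ 2) :=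
        measureReal_sum_mul_ite_lt_ge_le hmt hdist hindep (fun p ↦ hw p.1) (by positivity)
          (by rw [hkR, div_le_one (by positivity)]; linarith) (by nlinarith)
    _ ≤ Real.exp (-(4 * ℓ)) := by
        rw [Real.exp_le_exp, h_sum_sq]
        refine neg_two_mul_sq_div_le_neg_four_mul hℓR (mul_pos hk_pos h_sum_sq_pos) ?_
        rw [hkR]
        nlinarith

/-- The Hoeffding-inequality application (eq:sij) in Case 1 of the proof of the
general-algorithms upper bound: with `k = 8ℓ` copies and nonnegative weights `w i`
summing to `ℓ`, and i.i.d. uniform `[0,1]` arrival times `t (i,j)`, the probability that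
`∑ i ∑ j w i · 𝟙{t (i,j) < 2/k}` exceeds `7ℓ² − ℓ` is at most `e^{−4ℓ}`. -/
theorem stmt14 (ℓ n k : ℕ) (hℓ : 1 ≤ ℓ) (hn : 1 ≤ n) (hk : k = 8 * ℓ)
    (w : Fin n → ℝ) (hw : ∀ i, 0 ≤ w i) (hsum : ∑ i, w i = (ℓ:ℝ))
    (Ω : Type*) [MeasurableSpace Ω] (μ : Measure Ω) [IsProbabilityMeasure μ]
    (t : Fin n × Fin k → Ω → ℝ) (hmt : ∀ p, Measurable (t p))
    (hdist : ∀ p, Measure.map (t p) μ = volume.restrict (Set.Icc (0:ℝ) 1))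
    (hindep : iIndepFun t μ) :
    μ {ω | 7 * (ℓ:ℝ) ^ 2 - ℓ < ∑ i, ∑ j, w i * (if t (i, j) ω < 2 / (k:ℝ) then 1 else 0)}
      ≤ ENNReal.ofReal (Real.exp (-(4 * (ℓ:ℝ)))) :=
  stmt14_general ℓ n k hℓ hk w hw hsum Ω μ t hmt hdist hindep
end

section
/- Let k ≥ 4 be an integer, and set ε := e^{−4k²}, p := e^{−2k}, and N := 2k. Let X₁,…,X_N be independent random variables where X₁ = ⋯ = X_k = 1 deterministically, and X_{k+1},…,X_{2k} each equal 1+√ε with probability 1−p and equal 0 with probability p. Let σ be a uniformly random permutation of {1,…,N}, independent of X₁,…,X_N, set Y_m := X_{σ(m)} for m = 1,…,N, and let 𝔉 = (𝔉_m)_{m=0}^{N} be the filtration where 𝔉_m is generated by (σ(1), Y₁),…,(σ(m), Y_m). Then for every stopping time T with respect to 𝔉 taking values in {1,…,N} ∪ {∞}, it holds that E[Y_T·𝟙{T ≤ N}] ≤ 1 + √ε − √ε·4^{−k} < (1 − ε)·(1 + √ε·(1 − p)). -/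
/-!
With probability at least `4⁻ᵏ` the arrival order is *bad*: the `k` deterministic rewards arrive
first. On a bad order the first `k` observations are `(σ j, 1)` and reveal nothing about the
random rewards, so the event `{T ≤ k}` is a function of `σ` alone and is therefore independent of
the random rewards. Stopping by time `k` earns `1`; stopping later earns `1 + √ε` only if some
random reward is nonzero, which has probability `1 - pᵏ = 1 - √ε`, and `(1 + √ε)(1 - √ε) ≤ 1`.
Off the bad orders nothing beats `1 + √ε`, so the expected reward is at most
`1 + √ε - √ε · P(bad) ≤ 1 + √ε - √ε · 4⁻ᵏ`, which is below the target for `k ≥ 4`.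
-/

open MeasureTheory ProbabilityTheory Finset
open scoped Nat ENNReal

theorem Real.sqrt_exp_neg_four_mul_sq (k : ℕ) :
    √(Real.exp (-(4 * (k : ℝ) ^ 2))) = Real.exp (-(2 * (k : ℝ))) ^ k := by
  rw [← Real.exp_nat_mul, Real.sqrt_eq_iff_mul_self_eq (Real.exp_pos _).le (Real.exp_pos _).le,
    ← Real.exp_add]
  ring_nf

theorem three_mul_exp_neg_two_mul_lt_inv_four_pow {k : ℕ} (hk : 4 ≤ k) :
    3 * Real.exp (-(2 * (k : ℝ))) < ((4 : ℝ) ^ k)⁻¹ := by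
  have he : 4 * Real.exp (-2) < 4 / 7 := by
    have := Real.exp_one_gt_d9
    rw [Real.exp_neg, show (2 : ℝ) = 1 + 1 by norm_num, Real.exp_add]
    rw [mul_inv_lt_iff₀ (by positivity)]
    nlinarith
  have hpow : (4 * Real.exp (-2)) ^ k ≤ (4 / 7 : ℝ) ^ 4 :=
    (pow_le_pow_left₀ (by positivity) he.le k).trans
      (pow_le_pow_of_le_one (by norm_num) (by norm_num) hk)
  rw [← one_div, lt_div_iff₀ (by positivity), mul_assoc, show -(2 * (k : ℝ)) = k * (-2) by ring,
    Real.exp_nat_mul, ← mul_pow, mul_comm (Real.exp (-2))]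
  norm_num at hpow
  linarith

theorem one_add_sqrt_sub_mul_lt {ε p c : ℝ} (hε : 0 < ε) (hsp : √ε ≤ p) (hp : p ≤ 1)
    (hc : 3 * p < c) : 1 + √ε - √ε * c < (1 - ε) * (1 + √ε * (1 - p)) := by
  have hs : 0 < √ε := Real.sqrt_pos.2 hε
  rw [show 1 - ε = 1 - √ε * √ε by rw [Real.mul_self_sqrt hε.le]]
  nlinarith [mul_pos hs hs, mul_le_mul_of_nonneg_left hsp hs.le]

theorem Nat.factorial_two_mul_le_four_pow_mul (n : ℕ) : (2 * n)! ≤ 4 ^ n * (n ! * n !) := by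
  rw [two_mul, ← Nat.add_choose_mul_factorial_mul_factorial, mul_assoc, ← two_mul,
    ← Nat.centralBinom_eq_two_mul_choose]
  exact Nat.mul_le_mul_right _ (Nat.centralBinom_le_four_pow n)

theorem factorial_mul_factorial_le_card_perm_preserving {α : Type*} [Fintype α] [DecidableEq α]
    (p : α → Prop) [DecidablePred p] :
    (Fintype.card {a // p a})! * (Fintype.card {a // ¬p a})! ≤
      #{e : Equiv.Perm α | ∀ a, p (e a) ↔ p a} := by
  rw [← Fintype.card_perm, ← Fintype.card_perm, ← Fintype.card_prod, ← Finset.card_univ,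
    ← card_image_of_injective _ (Equiv.Perm.subtypeCongrHom_injective p)]
  refine card_le_card fun e he => ?_
  obtain ⟨⟨a, b⟩, -, rfl⟩ := mem_image.mp he
  simp only [mem_filter, mem_univ, true_and]
  intro x
  by_cases hx : p x
  · simpa [Equiv.Perm.subtypeCongrHom, Equiv.Perm.subtypeCongr.left_apply _ _ hx, hx]
      using (a ⟨x, hx⟩).2
  · simpa [Equiv.Perm.subtypeCongrHom, Equiv.Perm.subtypeCongr.right_apply _ _ hx, hx]
      using (b ⟨x, hx⟩).2

theorem Fin.card_filter_le_val {n m : ℕ} : #{i : Fin n | m ≤ (i : ℕ)} = n - m := by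
  have := card_filter_add_card_filter_not (s := (univ : Finset (Fin n))) fun i => (i : ℕ) < m
  simp only [not_lt, Fin.card_filter_val_lt, card_univ, Fintype.card_fin] at this
  omega

section

variable {Ω : Type*} [MeasurableSpace Ω] {μ : Measure Ω}

theorem measure_setOf_exists_mem_eq {α ι : Type*} [MeasurableSpace α] [MeasurableSingletonClass α]
    {σ : Ω → α} (hσ : Measurable σ) {f : ι → α} (hf : Function.Injective f) {c : ℝ≥0∞}
    (hunif : ∀ i, μ {ω | σ ω = f i} = c) (P : Finset ι) :
    μ {ω | ∃ i ∈ P, σ ω = f i} = #P * c := by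
  have hdisj : (P : Set ι).PairwiseDisjoint fun i => {ω | σ ω = f i} :=
    fun i _ j _ hij => Set.disjoint_left.mpr fun ω hi hj => hij (hf (hi.symm.trans hj))
  rw [show {ω | ∃ i ∈ P, σ ω = f i} = ⋃ i ∈ P, {ω | σ ω = f i} by ext; simp,
    measure_biUnion_finset hdisj fun i _ => hσ (measurableSet_singleton _)]
  simp [hunif]

theorem ae_eq_or_eq_of_map_eq {β : Type*} [MeasurableSpace β] [MeasurableSingletonClass β]
    {Y : Ω → β} (hY : AEMeasurable Y μ) {a b : ℝ≥0∞} {x y : β}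
    (h : μ.map Y = a • Measure.dirac x + b • Measure.dirac y) :
    ∀ᵐ ω ∂μ, Y ω = x ∨ Y ω = y := by
  refine ae_of_ae_map (p := fun z => z = x ∨ z = y) hY ?_
  have hm : MeasurableSet {z : β | z = x ∨ z = y} :=
    (measurableSet_singleton x).union (measurableSet_singleton y)
  rw [h, ae_add_measure_iff]
  exact ⟨Measure.ae_smul_measure ((ae_dirac_iff hm).2 (Or.inl rfl)) _,
    Measure.ae_smul_measure ((ae_dirac_iff hm).2 (Or.inr rfl)) _⟩

theorem measure_preimage_singleton_of_map_eq {β : Type*} [MeasurableSpace β]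
    [MeasurableSingletonClass β] {Y : Ω → β} (hY : Measurable Y) {a b : ℝ≥0∞} {x y : β}
    (hxy : x ≠ y) (h : μ.map Y = a • Measure.dirac x + b • Measure.dirac y) :
    μ (Y ⁻¹' {x}) = a := by
  rw [← Measure.map_apply hY (measurableSet_singleton x), h]
  simp [Set.indicator, hxy.symm]

theorem ProbabilityTheory.iIndepFun.measure_setOf_forall_mem_eq {ι β : Type*} [MeasurableSpace β]
    [MeasurableSingletonClass β] {X : ι → Ω → β} (hX : iIndepFun X μ)
    (I : Finset ι) {x : β} {q : ℝ≥0∞} (hq : ∀ i ∈ I, μ (X i ⁻¹' {x}) = q) :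
    μ {ω | ∀ i ∈ I, X i ω = x} = q ^ #I := by
  rw [show {ω | ∀ i ∈ I, X i ω = x} = ⋂ i ∈ I, X i ⁻¹' {x} by ext; simp,
    hX.measure_inter_preimage_eq_mul I fun _ _ => measurableSet_singleton x, prod_congr rfl hq,
    prod_const]

theorem ENat.measurable_of_measurableSet_le {T : Ω → ℕ∞}
    (hT : ∀ m : ℕ, MeasurableSet {ω | T ω ≤ m}) : Measurable T := by
  refine ENat.measurable_iff.2 fun n => ?_
  cases n with
  | zero => convert hT 0 using 1; ext ω; simp
  | succ n =>
    convert (hT (n + 1)).diff (hT n) using 1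
    ext ω
    simp [le_antisymm_iff, ENat.add_one_le_iff (ENat.natCast_ne_top n)]

theorem setIntegral_le_measureReal_of_le_indicator [IsFiniteMeasure μ] {V : Ω → ℝ} {C A : Set Ω}
    {a : ℝ} (hV : Integrable V μ) (hC : MeasurableSet C) (hA : MeasurableSet A)
    (hle : ∀ᵐ ω ∂μ, ω ∈ C → V ω ≤ Aᶜ.indicator (fun _ => a) ω)
    (hindep : μ (C ∩ A) = μ C * μ A) (ha : a * (1 - μ.real A) ≤ 1) :
    ∫ ω in C, V ω ∂μ ≤ μ.real C := by
  have hCA : μ.real (C \ A) = μ.real C * (1 - μ.real A) := by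
    have hsplit := measureReal_inter_add_sdiff (μ := μ) (s := C) hA
    have hprod : μ.real (C ∩ A) = μ.real C * μ.real A := by
      simp [Measure.real, hindep, ENNReal.toReal_mul]
    linear_combination hsplit - hprod
  calc ∫ ω in C, V ω ∂μ ≤ ∫ ω in C, Aᶜ.indicator (fun _ => a) ω ∂μ :=
        setIntegral_mono_on_ae hV.integrableOn
          ((integrable_const a).indicator hA.compl).integrableOn hC hle
    _ = a * (μ.real C * (1 - μ.real A)) := by
        rw [setIntegral_indicator hA.compl, setIntegral_const, ← Set.sdiff_eq, hCA, smul_eq_mul,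
          mul_comm]
    _ ≤ μ.real C := by nlinarith [measureReal_nonneg (μ := μ) (s := C)]

theorem integral_le_of_setIntegral_le [IsProbabilityMeasure μ] {V : Ω → ℝ} {B : Set Ω} {a : ℝ}
    (hV : Integrable V μ) (hB : MeasurableSet B) (hVB : ∫ ω in B, V ω ∂μ ≤ μ.real B)
    (hVa : ∀ᵐ ω ∂μ, V ω ≤ a) : ∫ ω, V ω ∂μ ≤ a - (a - 1) * μ.real B := by
  have hBc : ∫ ω in Bᶜ, V ω ∂μ ≤ a * (1 - μ.real B) :=
    calc ∫ ω in Bᶜ, V ω ∂μ ≤ ∫ _ in Bᶜ, a ∂μ :=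
          setIntegral_mono_ae hV.integrableOn (integrable_const a).integrableOn hVa
      _ = a * (1 - μ.real B) := by
          rw [setIntegral_const, probReal_compl_eq_one_sub hB, smul_eq_mul, mul_comm]
  rw [← integral_add_compl hB hV]
  linarith

end

/-- `Y_t 𝟙{t ≤ n}` for the order `g` and rewards `x`, positions being numbered from `1`;
since `(⊤ : ℕ∞).toNat = 0`, never stopping earns `0`. -/
def stoppedReward {n : ℕ} (t : ℕ∞) (g : Fin n → Fin n) (x : Fin n → ℝ) : ℝ :=
  if h : 1 ≤ t.toNat ∧ t.toNat ≤ n then x (g ⟨t.toNat - 1, by omega⟩) else 0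

theorem stoppedReward_eq_zero_or {n : ℕ} (t : ℕ∞) (g : Fin n → Fin n) (x : Fin n → ℝ) :
    stoppedReward t g x = 0 ∨ ∃ j : Fin n, t = (j + 1 : ℕ) ∧ stoppedReward t g x = x (g j) := by
  unfold stoppedReward
  split_ifs with h
  · refine Or.inr ⟨⟨t.toNat - 1, by omega⟩, ?_, rfl⟩
    have ht : t ≠ ⊤ := by rintro rfl; simp at h
    rw [show t.toNat - 1 + 1 = t.toNat by omega, ENat.natCast_toNat ht]
  · exact Or.inl rfl

theorem stoppedReward_mem_Icc {n : ℕ} {t : ℕ∞} {g : Fin n → Fin n} {x : Fin n → ℝ} {a : ℝ}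
    (hx : ∀ i, x i ∈ Set.Icc 0 a) (ha : 0 ≤ a) : stoppedReward t g x ∈ Set.Icc 0 a := by
  obtain h | ⟨j, -, h⟩ := stoppedReward_eq_zero_or t g x <;> rw [h]
  · exact ⟨le_rfl, ha⟩
  · exact hx _

theorem measurable_stoppedReward {n : ℕ} :
    Measurable fun q : (ℕ∞ × (Fin n → Fin n)) × (Fin n → ℝ) => stoppedReward q.1.1 q.1.2 q.2 := by
  refine measurable_from_prod_countable_right fun q => ?_
  by_cases h : 1 ≤ q.1.toNat ∧ q.1.toNat ≤ n
  · simp only [stoppedReward, dif_pos h]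
    exact measurable_pi_apply (q.2 ⟨q.1.toNat - 1, by omega⟩)
  · simp [stoppedReward, h]

/-- The pairs `(σ j, X (σ j))` seen at positions `j < m`, padded with `d`; it generates `𝔉_m`. -/
def observation {Ω : Type*} {n : ℕ} (σ : Ω → Fin n → Fin n) (X : Fin n → Ω → ℝ) (d : Fin n × ℝ)
    (m : ℕ) (ω : Ω) (j : Fin n) : Fin n × ℝ :=
  if (j : ℕ) < m then (σ ω j, X (σ ω j) ω) else d

theorem measurable_observation {Ω : Type*} [MeasurableSpace Ω] {n : ℕ} {σ : Ω → Fin n → Fin n}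
    {X : Fin n → Ω → ℝ}
    (hσ : Measurable σ) (hX : ∀ i, Measurable (X i)) (d : Fin n × ℝ) (m : ℕ) :
    Measurable (observation σ X d m) := by
  refine measurable_pi_lambda _ fun j => ?_
  by_cases hj : (j : ℕ) < m
  · have hXσ : Measurable fun ω => X (σ ω j) ω :=
      (measurable_from_prod_countable_right (f := fun q : Fin n × Ω => X q.1 q.2) hX).comp
        ((measurable_pi_apply j).comp hσ |>.prodMk measurable_id)
    simpa [observation, hj] using ((measurable_pi_apply j).comp hσ).prodMk hXσ
  · simp [observation, hj]

/-- `e j` is the reward arriving at position `j`: the `k` deterministic rewards come first. -/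
def badOrders (k : ℕ) : Finset (Equiv.Perm (Fin (2 * k))) :=
  {e | ∀ j, (e j : ℕ) < k ↔ (j : ℕ) < k}

theorem factorial_two_mul_le_four_pow_mul_card_badOrders (k : ℕ) :
    (2 * k)! ≤ 4 ^ k * #(badOrders k) := by
  have hcard := factorial_mul_factorial_le_card_perm_preserving fun j : Fin (2 * k) => (j : ℕ) < k
  rw [Fintype.card_subtype_compl, Fintype.card_subtype, Fin.card_filter_val_lt, Fintype.card_fin,
    show min (2 * k) k = k by omega, show 2 * k - k = k by omega] at hcard
  refine (Nat.factorial_two_mul_le_four_pow_mul k).trans (Nat.mul_le_mul_left _ ?_)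
  exact hcard.trans_eq (by unfold badOrders; congr)

section Model

variable {k : ℕ} {Ω : Type*} {X : Fin (2 * k) → Ω → ℝ} {σ : Ω → Fin (2 * k) → Fin (2 * k)}
  {T : Ω → ℕ∞}

theorem stoppedReward_le_one_of_mem_badOrders {t : ℕ∞} {e : Equiv.Perm (Fin (2 * k))}
    {x : Fin (2 * k) → ℝ} (he : e ∈ badOrders k) (hx : ∀ i : Fin (2 * k), (i : ℕ) < k → x i = 1)
    (ht : t ≤ k) : stoppedReward t e x ≤ 1 := by
  obtain h | ⟨j, rfl, h⟩ := stoppedReward_eq_zero_or t e x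
  · simp [h]
  · rw [h, hx _ (((mem_filter.1 he).2 j).2 (by exact_mod_cast ht))]

theorem stoppedReward_eq_zero_of_mem_badOrders {t : ℕ∞} {e : Equiv.Perm (Fin (2 * k))}
    {x : Fin (2 * k) → ℝ} (he : e ∈ badOrders k) (hx : ∀ i : Fin (2 * k), k ≤ (i : ℕ) → x i = 0)
    (ht : ¬t ≤ k) : stoppedReward t e x = 0 := by
  obtain h | ⟨j, rfl, h⟩ := stoppedReward_eq_zero_or t e x
  · exact h
  · refine h.trans (hx _ (not_lt.1 fun hj => ht ?_))
    exact_mod_cast ((mem_filter.1 he).2 j).1 hj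

theorem exists_badOrders_inter_not_le_eq_preimage
    (hXdet : ∀ i : Fin (2 * k), (i : ℕ) < k → ∀ ω, X i ω = 1) {d : Fin (2 * k) × ℝ}
    (hT : MeasurableSet[MeasurableSpace.comap (observation σ X d k) inferInstance]
      {ω | T ω ≤ k}) :
    ∃ U, {ω | ∃ e ∈ badOrders k, σ ω = ⇑e} ∩ {ω | T ω ≤ k}ᶜ = σ ⁻¹' U := by
  obtain ⟨S, -, hS⟩ := hT
  let G (g : Fin (2 * k) → Fin (2 * k)) (j : Fin (2 * k)) : Fin (2 * k) × ℝ :=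
    if (j : ℕ) < k then (g j, 1) else d
  have hobs : ∀ ω, (∃ e ∈ badOrders k, σ ω = ⇑e) → observation σ X d k ω = G (σ ω) := by
    rintro ω ⟨e, he, hσe⟩
    funext j
    simp only [observation, G]
    split_ifs with hj
    · rw [hXdet _ (hσe ▸ ((mem_filter.1 he).2 j).2 hj) ω]
    · rfl
  refine ⟨{g | ∃ e ∈ badOrders k, g = ⇑e} ∩ (G ⁻¹' S)ᶜ, ?_⟩
  ext ω
  simp only [Set.mem_inter_iff, Set.mem_compl_iff, Set.mem_preimage, ← hS]
  exact and_congr_right fun hB => by rw [hobs ω hB]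

variable [MeasurableSpace Ω] {μ : Measure Ω}

theorem measurableSet_badOrders (hσ : Measurable σ) :
    MeasurableSet {ω | ∃ e ∈ badOrders k, σ ω = ⇑e} :=
  hσ (Set.toFinite {g | ∃ e ∈ badOrders k, g = ⇑e}).measurableSet

theorem inv_four_pow_le_measureReal_badOrders (hσ : Measurable σ)
    (hunif : ∀ e : Equiv.Perm (Fin (2 * k)), μ {ω | σ ω = ⇑e} = ((2 * k)! : ℝ≥0∞)⁻¹) :
    ((4 : ℝ) ^ k)⁻¹ ≤ μ.real {ω | ∃ e ∈ badOrders k, σ ω = ⇑e} := by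
  rw [measureReal_def, measure_setOf_exists_mem_eq hσ DFunLike.coe_injective hunif]
  simp only [ENNReal.toReal_mul, ENNReal.toReal_inv, ENNReal.toReal_natCast]
  rw [← div_eq_mul_inv, le_div_iff₀ (by positivity), inv_mul_le_iff₀ (by positivity)]
  exact_mod_cast factorial_two_mul_le_four_pow_mul_card_badOrders k

theorem measureReal_forall_eq_zero {p a : ℝ} (hp : 0 ≤ p) (ha : a ≠ 0)
    (hmX : ∀ i, Measurable (X i))
    (hXrand : ∀ i : Fin (2 * k), k ≤ (i : ℕ) →
      μ.map (X i) = ENNReal.ofReal p • Measure.dirac 0 + ENNReal.ofReal (1 - p) • Measure.dirac a)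
    (hXindep : iIndepFun X μ) :
    μ.real {ω | ∀ i ∈ ({i | k ≤ (i : ℕ)} : Finset (Fin (2 * k))), X i ω = 0} = p ^ k := by
  rw [measureReal_def, hXindep.measure_setOf_forall_mem_eq _ fun i hi =>
    measure_preimage_singleton_of_map_eq (hmX i) ha.symm (hXrand i (mem_filter.1 hi).2),
    Fin.card_filter_le_val, show 2 * k - k = k by omega]
  simp [hp]

theorem ae_stoppedReward_mem_Icc {p a : ℝ} (ha : 1 ≤ a) (hmX : ∀ i, Measurable (X i))
    (hXdet : ∀ i : Fin (2 * k), (i : ℕ) < k → ∀ ω, X i ω = 1)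
    (hXrand : ∀ i : Fin (2 * k), k ≤ (i : ℕ) →
      μ.map (X i) = ENNReal.ofReal p • Measure.dirac 0 + ENNReal.ofReal (1 - p) • Measure.dirac a) :
    ∀ᵐ ω ∂μ, stoppedReward (T ω) (σ ω) (fun i => X i ω) ∈ Set.Icc 0 a := by
  refine (ae_all_iff.2 fun i => ?_).mono fun ω hω => stoppedReward_mem_Icc hω (by linarith)
  by_cases hi : k ≤ (i : ℕ)
  · filter_upwards [ae_eq_or_eq_of_map_eq (hmX i).aemeasurable (hXrand i hi)] with ω h
    rcases h with h | h <;> rw [h] <;> constructor <;> linarith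
  · exact ae_of_all _ fun ω => by rw [hXdet i (not_le.1 hi)]; exact ⟨zero_le_one, ha⟩

theorem measurable_of_measurableSet_comap_observation (hmX : ∀ i, Measurable (X i))
    (hmσ : Measurable σ) {d : Fin (2 * k) × ℝ}
    (hTstop : ∀ m : ℕ, MeasurableSet[MeasurableSpace.comap (observation σ X d m) inferInstance]
      {ω | T ω ≤ m}) :
    Measurable T :=
  ENat.measurable_of_measurableSet_le fun m =>
    (measurable_observation hmσ hmX d m).comap_le _ (hTstop m)

theorem setIntegral_badOrders_stoppedReward_le [IsFiniteMeasure μ] {p a : ℝ} (hp : 0 ≤ p)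
    (ha : 1 ≤ a) (hpa : a * (1 - p ^ k) ≤ 1) (hmX : ∀ i, Measurable (X i))
    (hXdet : ∀ i : Fin (2 * k), (i : ℕ) < k → ∀ ω, X i ω = 1)
    (hXrand : ∀ i : Fin (2 * k), k ≤ (i : ℕ) →
      μ.map (X i) = ENNReal.ofReal p • Measure.dirac 0 + ENNReal.ofReal (1 - p) • Measure.dirac a)
    (hXindep : iIndepFun X μ) (hmσ : Measurable σ)
    (hσindep : IndepFun (fun ω i => X i ω) σ μ) {d : Fin (2 * k) × ℝ}
    (hTstop : ∀ m : ℕ, MeasurableSet[MeasurableSpace.comap (observation σ X d m) inferInstance]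
      {ω | T ω ≤ m}) (hV : Integrable (fun ω => stoppedReward (T ω) (σ ω) (fun i => X i ω)) μ) :
    ∫ ω in {ω | ∃ e ∈ badOrders k, σ ω = ⇑e}, stoppedReward (T ω) (σ ω) (fun i => X i ω) ∂μ ≤
      μ.real {ω | ∃ e ∈ badOrders k, σ ω = ⇑e} := by
  set B := {ω | ∃ e ∈ badOrders k, σ ω = ⇑e}
  set E := {ω | T ω ≤ k}
  set W : Set (Fin (2 * k) → ℝ) := {x | ∀ i ∈ ({i | k ≤ (i : ℕ)} : Finset (Fin (2 * k))), x i = 0}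
  set A := (fun ω i => X i ω) ⁻¹' W
  have hB : MeasurableSet B := measurableSet_badOrders hmσ
  have hE : MeasurableSet E := (measurable_of_measurableSet_comap_observation hmX hmσ hTstop) .of_discrete
  have hW : MeasurableSet W := by measurability
  have hA : MeasurableSet A := measurable_pi_lambda _ hmX hW
  have hindep : μ (B \ E ∩ A) = μ (B \ E) * μ A := by
    obtain ⟨U, hU⟩ := exists_badOrders_inter_not_le_eq_preimage hXdet (hTstop k)
    rw [Set.sdiff_eq, hU, Set.inter_comm, mul_comm (μ _)]
    exact hσindep.measure_inter_preimage_eq_mul W U hW (Set.toFinite U).measurableSet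
  have hμA : μ.real A = p ^ k := measureReal_forall_eq_zero hp (by linarith) hmX hXrand hXindep
  rw [← integral_inter_add_sdiff hE hV.integrableOn, ← measureReal_inter_add_sdiff hE]
  refine add_le_add ?_ (setIntegral_le_measureReal_of_le_indicator hV (hB.diff hE) hA ?_ hindep
    (by rwa [hμA]))
  · calc _ ≤ ∫ _ in B ∩ E, 1 ∂μ :=
          setIntegral_mono_on hV.integrableOn (integrable_const 1).integrableOn (hB.inter hE)
            fun ω ⟨⟨e, he, hσe⟩, hT⟩ => by
              simp only [hσe]
              exact stoppedReward_le_one_of_mem_badOrders he (fun i hi => hXdet i hi ω) hT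
      _ = μ.real (B ∩ E) := by simp
  · filter_upwards [ae_stoppedReward_mem_Icc ha hmX hXdet hXrand] with ω hω ⟨⟨e, he, hσe⟩, hT⟩
    by_cases hωA : ω ∈ A
    · rw [Set.indicator_of_notMem (not_not.2 hωA)]
      simp only [hσe]
      exact (stoppedReward_eq_zero_of_mem_badOrders he
        (fun i hi => hωA i (mem_filter.2 ⟨mem_univ _, hi⟩)) hT).le
    · rw [Set.indicator_of_mem hωA]
      exact hω.2

theorem integral_stoppedReward_le [IsProbabilityMeasure μ] {p a : ℝ} (hp : 0 ≤ p) (ha : 1 ≤ a)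
    (hpa : a * (1 - p ^ k) ≤ 1) (hmX : ∀ i, Measurable (X i))
    (hXdet : ∀ i : Fin (2 * k), (i : ℕ) < k → ∀ ω, X i ω = 1)
    (hXrand : ∀ i : Fin (2 * k), k ≤ (i : ℕ) →
      μ.map (X i) = ENNReal.ofReal p • Measure.dirac 0 + ENNReal.ofReal (1 - p) • Measure.dirac a)
    (hXindep : iIndepFun X μ) (hmσ : Measurable σ)
    (hσindep : IndepFun (fun ω i => X i ω) σ μ) {d : Fin (2 * k) × ℝ}
    (hTstop : ∀ m : ℕ, MeasurableSet[MeasurableSpace.comap (observation σ X d m) inferInstance]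
      {ω | T ω ≤ m}) :
    ∫ ω, stoppedReward (T ω) (σ ω) (fun i => X i ω) ∂μ ≤
      a - (a - 1) * μ.real {ω | ∃ e ∈ badOrders k, σ ω = ⇑e} := by
  have hVa := ae_stoppedReward_mem_Icc ha hmX hXdet hXrand (μ := μ) (σ := σ) (T := T)
  have hmT := measurable_of_measurableSet_comap_observation hmX hmσ hTstop
  have hmV : Measurable fun ω => stoppedReward (T ω) (σ ω) (fun i => X i ω) :=
    measurable_stoppedReward.comp ((hmT.prodMk hmσ).prodMk (measurable_pi_lambda _ hmX))
  have hV : Integrable (fun ω => stoppedReward (T ω) (σ ω) (fun i => X i ω)) μ :=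
    .mono' (integrable_const a) hmV.aestronglyMeasurable
      (hVa.mono fun ω h => by rw [Real.norm_eq_abs, abs_of_nonneg h.1]; exact h.2)
  refine integral_le_of_setIntegral_le hV (measurableSet_badOrders hmσ) ?_ (hVa.mono fun _ h => h.2)
  exact setIntegral_badOrders_stoppedReward_le hp ha hpa hmX hXdet hXrand hXindep hmσ hσindep
    hTstop hV

end Model

/-- **Theorem 5 (thm:general), lower bound.** Discrete-time hard instance for general
adaptive algorithms: with `k ≥ 4`, `ε = e^{−4k²}`, `p = e^{−2k}` and `N = 2k` rewards
(`k` deterministic rewards equal to `1` and `k` i.i.d. rewards equal to `1+√ε` w.p. `1−p`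
and `0` w.p. `p`) presented in a uniformly random order `σ` independent of the rewards,
every stopping time `T` (with values in `{1,…,N} ∪ {∞}`) with respect to the filtration
generated by the observed identities and values satisfies
`E[Y_T·𝟙{T ≤ N}] ≤ 1 + √ε − √ε·4^{−k} < (1−ε)·(1+√ε·(1−p))`. -/
theorem stmt16
    (k : ℕ) (hk : 4 ≤ k)
    (ε p : ℝ) (hεdef : ε = Real.exp (-(4 * (k:ℝ) ^ 2))) (hpdef : p = Real.exp (-(2 * (k:ℝ))))
    (Ω : Type*) [MeasurableSpace Ω] (μ : Measure Ω) [IsProbabilityMeasure μ]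
    -- the rewards X₁,…,X_N
    (X : Fin (2 * k) → Ω → ℝ) (hmX : ∀ m, Measurable (X m))
    (hXdet : ∀ m : Fin (2 * k), (m : ℕ) < k → ∀ ω, X m ω = 1)
    (hXrand : ∀ m : Fin (2 * k), k ≤ (m : ℕ) →
      Measure.map (X m) μ =
        ENNReal.ofReal p • Measure.dirac 0
          + ENNReal.ofReal (1 - p) • Measure.dirac (1 + Real.sqrt ε))
    (hXindep : iIndepFun X μ)
    -- the uniformly random arrival order σ, independent of the rewards
    (σ : Ω → Fin (2 * k) → Fin (2 * k)) (hmσ : Measurable σ)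
    (hσunif : ∀ e : Equiv.Perm (Fin (2 * k)),
      μ {ω | σ ω = ⇑e} = ((2 * k).factorial : ENNReal)⁻¹)
    (hσindep : IndepFun (fun ω (m : Fin (2 * k)) => X m ω) σ μ)
    -- T is a stopping time with values in {1,…,N} ∪ {∞} with respect to the filtration
    -- 𝔉_m generated by the observed pairs (σ(1),Y₁),…,(σ(m),Y_m), where Y_j = X_{σ(j)}
    (T : Ω → ℕ∞)
    (hTstop : ∀ m : ℕ, MeasurableSet[MeasurableSpace.comap
      (fun ω (j : Fin (2 * k)) =>
        if (j : ℕ) < m then (σ ω j, X (σ ω j) ω) else ((⟨0, by omega⟩ : Fin (2 * k)), 0))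
      inferInstance] {ω | T ω ≤ (m : ℕ∞)}) :
    (∫ ω, (if h : 1 ≤ (T ω).toNat ∧ (T ω).toNat ≤ 2 * k
        then X (σ ω ⟨(T ω).toNat - 1, by omega⟩) ω else 0) ∂μ)
      ≤ 1 + Real.sqrt ε - Real.sqrt ε / 4 ^ k ∧
    1 + Real.sqrt ε - Real.sqrt ε / 4 ^ k < (1 - ε) * (1 + Real.sqrt ε * (1 - p)) := by
  have hp0 : 0 < p := hpdef ▸ Real.exp_pos _
  have hp1 : p ≤ 1 := hpdef ▸ Real.exp_le_one_iff.2 (by simp)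
  have hε0 : 0 < ε := hεdef ▸ Real.exp_pos _
  have hs : √ε = p ^ k := by rw [hεdef, hpdef, Real.sqrt_exp_neg_four_mul_sq]
  have hsp : √ε ≤ p := hs ▸ pow_le_of_le_one hp0.le hp1 (by omega)
  have hbound := integral_stoppedReward_le hp0.le (le_add_of_nonneg_right (Real.sqrt_nonneg ε))
    (by rw [← hs]; nlinarith [Real.sqrt_nonneg ε]) hmX hXdet hXrand hXindep hmσ hσindep hTstop
  have hbad := inv_four_pow_le_measureReal_badOrders hmσ hσunif
  rw [div_eq_mul_inv]
  refine ⟨hbound.trans ?_, one_add_sqrt_sub_mul_lt hε0 hsp hp1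
    (hpdef ▸ three_mul_exp_neg_two_mul_lt_inv_four_pow hk)⟩
  nlinarith [mul_le_mul_of_nonneg_left hbad (Real.sqrt_nonneg ε)]
end
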